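/- arXiv:0804.1693 — 4 statements merged into one kernel-verified Lean document; each statement's English description precedes it below -/
import Mathlib

section
/- Let (M_h)_h be a sequence of subdivisions of [0,1], indexed by h ↓ 0, such that each M_h has maximal step at most h and M_h ⊆ M_{h'} whenever h > h'. Let M₀ > 0 and for each h let u_h : M_h → ℝ satisfy the discrete convexity inequalities and |u_h(x)| ≤ M₀ for all x ∈ M_h, and extend each u_h to [0,1] piecewise linearly. Then there exists a subsequence (u_{h'}) of (u_h) converging to a continuous convex function u defined on [0,1], with convergence uniform on every compact subset of (0,1). -/
/-
On every cell of the mesh the piecewise linear extension `U` is the secant of `u`, and discrete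
convexity says that the secant line of any cell lies below `u` at all mesh points, hence below `U`
on the whole interval. So `U` is the supremum of its affine pieces: it is convex, and bounded by
`M₀` because it interpolates `u`. A convex function bounded by `M₀` on `(0, 1)` is
`2M₀/δ`-Lipschitz on `(δ, 1 - δ)`, so a diagonal subsequence converging on a countable dense set
converges uniformly on every `[δ, 1 - δ]`. The limit is convex and bounded on `(0, 1)`; its slopes
from an interior point are monotone and bounded near each endpoint, so it has one-sided limits
there, and extending it by them gives a continuous convex function on `[0, 1]`.
-/

open Set Filter Topology

structure IsCell (A : Finset ℝ) (a b : ℝ) : Prop where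
  left_mem : a ∈ A
  right_mem : b ∈ A
  lt : a < b
  notMem : ∀ c ∈ A, ¬(a < c ∧ c < b)

def DiscreteConvexOn (A : Finset ℝ) (u : ℝ → ℝ) : Prop :=
  ∀ a b c, IsCell A a b → IsCell A b c → slope u a b ≤ slope u b c

noncomputable def secantLine (u : ℝ → ℝ) (a b t : ℝ) : ℝ := u a + slope u a b * (t - a)

def IsPiecewiseLinearInterpolant (A : Finset ℝ) (u U : ℝ → ℝ) : Prop :=
  ∀ a b, IsCell A a b → ∀ t ∈ Icc a b, U t = secantLine u a b t

section SecantLine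

variable {u f g : ℝ → ℝ} {a b c d t : ℝ}

@[simp] lemma secantLine_left : secantLine u a b a = u a := by simp [secantLine]

lemma secantLine_right (hab : a ≠ b) : secantLine u a b b = u b := by
  rw [secantLine, slope_def_field, div_mul_cancel₀ _ (sub_ne_zero.2 hab.symm)]
  ring

@[simp] lemma secantLine_const (C : ℝ) : secantLine (fun _ => C) a b t = C := by
  simp [secantLine, slope_def_field]

lemma secantLine_add_mul {θ η x y : ℝ} (h : θ + η = 1) :
    secantLine u a b (θ * x + η * y) = θ * secantLine u a b x + η * secantLine u a b y := by
  simp only [secantLine]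
  linear_combination (slope u a b * a - u a) * h

lemma secantLine_secantLine (hcd : c ≠ d) :
    secantLine (secantLine u a b) c d t = secantLine u a b t := by
  have : slope (secantLine u a b) c d = slope u a b := by
    rw [slope_def_field, div_eq_iff (sub_ne_zero.2 hcd.symm)]
    simp only [secantLine]
    ring
  simp only [secantLine] at this ⊢
  rw [this]
  ring

lemma secantLine_le_secantLine (ht : t ∈ Icc c d) (hc : f c ≤ g c) (hd : f d ≤ g d) :
    secantLine f c d t ≤ secantLine g c d t := by
  rcases ht.1.eq_or_lt with rfl | hct
  · simpa using hc
  have hcd : 0 < d - c := by linarith [ht.2]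
  have key : secantLine g c d t - secantLine f c d t =
      ((d - t) * (g c - f c) + (t - c) * (g d - f d)) / (d - c) := by
    simp only [secantLine, slope_def_field]
    field_simp
    ring
  rw [← sub_nonneg, key]
  exact div_nonneg (add_nonneg (mul_nonneg (sub_nonneg.2 ht.2) (sub_nonneg.2 hc))
    (mul_nonneg (sub_nonneg.2 hct.le) (sub_nonneg.2 hd))) hcd.le

end SecantLine

lemma slope_mem_Icc_of_slope_le_slope {f : ℝ → ℝ} {a b c : ℝ} (hab : a < b) (hbc : b < c)
    (h : slope f a b ≤ slope f b c) : slope f a c ∈ Icc (slope f a b) (slope f b c) := by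
  simp only [slope_def_field] at h ⊢
  rw [div_le_div_iff₀ (by linarith) (by linarith)] at h
  constructor
  · rw [div_le_div_iff₀ (by linarith) (by linarith)]; nlinarith
  · rw [div_le_div_iff₀ (by linarith) (by linarith)]; nlinarith

lemma card_filter_mem_Ioo_lt {A : Finset ℝ} {a b a' b' p : ℝ} (ha : a ≤ a') (hb : b' ≤ b)
    (hp : p ∈ A) (hpab : p ∈ Ioo a b) (hp' : p ∉ Ioo a' b') :
    (A.filter (· ∈ Ioo a' b')).card < (A.filter (· ∈ Ioo a b)).card := by
  refine Finset.card_lt_card ((Finset.ssubset_iff_of_subset ?_).2 ⟨p, ?_, ?_⟩)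
  · exact Finset.monotone_filter_right A fun x _ hx => Ioo_subset_Ioo ha hb hx
  · exact Finset.mem_filter.2 ⟨hp, hpab⟩
  · exact fun h => hp' (Finset.mem_filter.1 h).2

lemma eq_secantLine_of_affine {u U : ℝ → ℝ} {a b : ℝ} (hab : a < b) (ha : U a = u a)
    (hb : U b = u b) (haff : ∃ m q : ℝ, ∀ t ∈ Icc a b, U t = m * t + q) :
    ∀ t ∈ Icc a b, U t = secantLine u a b t := by
  obtain ⟨m, q, hmq⟩ := haff
  intro t ht
  rw [hmq t ht, secantLine, slope_def_field, ← ha, ← hb, hmq a ⟨le_rfl, hab.le⟩,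
    hmq b ⟨hab.le, le_rfl⟩]
  field_simp [sub_ne_zero.2 hab.ne']
  ring

section Mesh

variable {A : Finset ℝ} {u U : ℝ → ℝ}

lemma exists_isCell_mem_Icc {p q t : ℝ} (hp : p ∈ A) (hq : q ∈ A) (hpq : p < q)
    (ht : t ∈ Icc p q) : ∃ a b, IsCell A a b ∧ t ∈ Icc a b := by
  classical
  -- a shortest interval with endpoints in `A` containing `t` is a cell
  let P := (A ×ˢ A).filter fun x => x.1 < x.2 ∧ t ∈ Icc x.1 x.2
  obtain ⟨⟨a, b⟩, hab, hmin⟩ :=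
    P.exists_min_image (fun x => x.2 - x.1) ⟨(p, q), by simp [P, hp, hq, hpq, ht.1, ht.2]⟩
  simp only [P, Finset.mem_filter, Finset.mem_product, mem_Icc] at hab
  obtain ⟨⟨ha, hb⟩, hlt, hat, htb⟩ := hab
  refine ⟨a, b, ⟨ha, hb, hlt, fun c hc ⟨hac, hcb⟩ => ?_⟩, hat, htb⟩
  rcases le_total t c with htc | hct
  · have := hmin (a, c) (by simp [P, ha, hc, hac, hat, htc])
    simp only at this
    linarith
  · have := hmin (c, b) (by simp [P, hc, hb, hcb, hct, htb])
    simp only at this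
    linarith

lemma IsPiecewiseLinearInterpolant.abs_le_of_abs_le {M p q t : ℝ}
    (hU : IsPiecewiseLinearInterpolant A u U) (hp : p ∈ A) (hq : q ∈ A) (hpq : p < q)
    (hM : ∀ x ∈ A, |u x| ≤ M) (ht : t ∈ Icc p q) : |U t| ≤ M := by
  obtain ⟨a, b, hab, htab⟩ := exists_isCell_mem_Icc hp hq hpq ht
  have ha := abs_le.1 (hM a hab.left_mem)
  have hb := abs_le.1 (hM b hab.right_mem)
  rw [hU a b hab t htab, abs_le]
  constructor
  · simpa using secantLine_le_secantLine (f := fun _ => -M) htab ha.1 hb.1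
  · simpa using secantLine_le_secantLine (g := fun _ => M) htab ha.2 hb.2

lemma DiscreteConvexOn.slope_le_slope (hconv : DiscreteConvexOn A u) {a b c : ℝ} (ha : a ∈ A)
    (hb : b ∈ A) (hc : c ∈ A) (hab : a < b) (hbc : b < c) : slope u a b ≤ slope u b c := by
  classical
  -- induction on the number of mesh points in `(a, c)`: an inner mesh point splits the triple
  induction hn : (A.filter (· ∈ Ioo a c)).card using Nat.strong_induction_on
    generalizing a b c with
  | _ n ih =>
  subst hn
  by_cases hl : ∃ p ∈ A, a < p ∧ p < b
  · obtain ⟨p, hp, hap, hpb⟩ := hl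
    have h₁ := ih _ (card_filter_mem_Ioo_lt le_rfl hbc.le hb ⟨hab, hbc⟩ (by simp))
      ha hp hb hap hpb rfl
    have h₂ := ih _ (card_filter_mem_Ioo_lt hap.le le_rfl hp ⟨hap, hpb.trans hbc⟩ (by simp))
      hp hb hc hpb hbc rfl
    exact (slope_mem_Icc_of_slope_le_slope hap hpb h₁).2.trans h₂
  by_cases hr : ∃ p ∈ A, b < p ∧ p < c
  · obtain ⟨p, hp, hbp, hpc⟩ := hr
    have h₁ := ih _ (card_filter_mem_Ioo_lt le_rfl hpc.le hp ⟨hab.trans hbp, hpc⟩ (by simp))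
      ha hb hp hab hbp rfl
    have h₂ := ih _ (card_filter_mem_Ioo_lt hab.le le_rfl hb ⟨hab, hbc⟩ (by simp))
      hb hp hc hbp hpc rfl
    exact h₁.trans (slope_mem_Icc_of_slope_le_slope hbp hpc h₂).1
  push Not at hl hr
  exact hconv a b c ⟨ha, hb, hab, fun p hp h => (hl p hp h.1).not_gt h.2⟩
    ⟨hb, hc, hbc, fun p hp h => (hr p hp h.1).not_gt h.2⟩

lemma DiscreteConvexOn.secantLine_le (hconv : DiscreteConvexOn A u) {a b p : ℝ}
    (hab : IsCell A a b) (hp : p ∈ A) : secantLine u a b p ≤ u p := by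
  rcases lt_trichotomy p a with hpa | rfl | hap
  · have h := hconv.slope_le_slope hp hab.left_mem hab.right_mem hpa hab.lt
    rw [slope_def_field u p a, div_le_iff₀ (by linarith)] at h
    simp only [secantLine]
    linarith
  · simp
  have hbp : b ≤ p := not_lt.1 fun h => hab.notMem p hp ⟨hap, h⟩
  rcases hbp.eq_or_lt with rfl | hbp
  · exact (secantLine_right hab.lt.ne).le
  have h := hconv.slope_le_slope hab.left_mem hab.right_mem hp hab.lt hbp
  rw [slope_def_field u b p, le_div_iff₀ (by linarith)] at h
  have hb := secantLine_right (u := u) hab.lt.ne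
  simp only [secantLine] at hb ⊢
  linarith

lemma DiscreteConvexOn.secantLine_le_of_mem_Icc (hconv : DiscreteConvexOn A u)
    (hU : IsPiecewiseLinearInterpolant A u U) {p q a b t : ℝ} (hp : p ∈ A) (hq : q ∈ A)
    (hpq : p < q) (hab : IsCell A a b) (ht : t ∈ Icc p q) : secantLine u a b t ≤ U t := by
  obtain ⟨c, d, hcd, htcd⟩ := exists_isCell_mem_Icc hp hq hpq ht
  rw [hU c d hcd t htcd, ← secantLine_secantLine hcd.lt.ne]
  exact secantLine_le_secantLine htcd (by simpa using hconv.secantLine_le hab hcd.left_mem)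
    (by simpa [secantLine_right hcd.lt.ne] using hconv.secantLine_le hab hcd.right_mem)

theorem DiscreteConvexOn.convexOn_Icc (hconv : DiscreteConvexOn A u)
    (hU : IsPiecewiseLinearInterpolant A u U) {p q : ℝ} (hp : p ∈ A) (hq : q ∈ A)
    (hpq : p < q) : ConvexOn ℝ (Icc p q) U := by
  refine ⟨convex_Icc p q, fun x hx y hy θ η hθ hη hθη => ?_⟩
  obtain ⟨a, b, hab, hz⟩ :=
    exists_isCell_mem_Icc hp hq hpq (convex_Icc p q hx hy hθ hη hθη)
  simp only [smul_eq_mul] at hz ⊢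
  rw [hU a b hab _ hz, secantLine_add_mul hθη]
  gcongr
  · exact hconv.secantLine_le_of_mem_Icc hU hp hq hpq hab hx
  · exact hconv.secantLine_le_of_mem_Icc hU hp hq hpq hab hy

end Mesh

lemma exists_subseq_tendsto_of_countable {α : Type*} {D : Set α} (hD : D.Countable)
    {f : ℕ → α → ℝ} {M : ℝ} (hf : ∀ k, ∀ x ∈ D, |f k x| ≤ M) :
    ∃ φ : ℕ → ℕ, StrictMono φ ∧ ∀ x ∈ D, ∃ L, Tendsto (fun j => f (φ j) x) atTop (𝓝 L) := by
  have := hD.to_subtype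
  obtain ⟨g, -, φ, hφ, hg⟩ := (isCompact_univ_pi fun _ : D => isCompact_Icc).tendsto_subseq
    (x := fun k (x : D) => f k x) fun k => mem_univ_pi.2 fun x => abs_le.1 (hf k x x.2)
  exact ⟨φ, hφ, fun x hx => ⟨g ⟨x, hx⟩, tendsto_pi_nhds.1 hg ⟨x, hx⟩⟩⟩

lemma uniformCauchySeqOn_of_lipschitzOnWith {α β : Type*} [PseudoMetricSpace α]
    [PseudoMetricSpace β] {g : ℕ → α → β} {S T D : Set α} {δ : ℝ} {L : NNReal}
    (hS : IsCompact S) (hδ : 0 < δ) (hST : Metric.thickening δ S ⊆ T)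
    (hg : ∀ j, LipschitzOnWith L (g j) T) (hD : Dense D)
    (hgD : ∀ p ∈ D ∩ T, CauchySeq fun j => g j p) : UniformCauchySeqOn g atTop S := by
  intro V hV
  obtain ⟨ε, hε, hεV⟩ := Metric.mem_uniformity_dist.1 hV
  set η := min δ (ε / 3 / (L + 1))
  have hη : 0 < η := lt_min hδ (by positivity)
  have hLη : L * η < ε / 3 := by
    have := (le_div_iff₀ (by positivity)).1 (min_le_right δ (ε / 3 / (L + 1)))
    nlinarith
  have hcover : S ⊆ ⋃ p ∈ D ∩ T, Metric.ball p η := fun x hx => by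
    obtain ⟨p, hpD, hxp⟩ := hD.exists_dist_lt x hη
    refine mem_biUnion ⟨hpD, hST (Metric.mem_thickening_iff.2 ⟨x, hx, ?_⟩)⟩
      (Metric.mem_ball.2 hxp)
    rw [dist_comm]
    exact hxp.trans_le (min_le_left _ _)
  obtain ⟨F, hFDT, hF, hSF⟩ :=
    hS.elim_finite_subcover_image (fun _ _ => Metric.isOpen_ball) hcover
  have hev : ∀ᶠ m in atTop ×ˢ atTop, ∀ p ∈ F, dist (g m.1 p) (g m.2 p) < ε / 3 := by
    rw [prod_atTop_atTop_eq]
    exact hF.eventually_all.2 fun p hp =>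
      (hgD p (hFDT hp)).tendsto_uniformity.eventually
        (Metric.dist_mem_uniformity (by positivity))
  filter_upwards [hev] with m hm x hx
  obtain ⟨p, hpF, hxp⟩ := mem_iUnion₂.1 (hSF hx)
  have hxT : x ∈ T := hST (Metric.self_subset_thickening hδ S hx)
  have hpT : p ∈ T := (hFDT hpF).2
  have hxp' : L * dist x p ≤ L * η := by gcongr; exact (Metric.mem_ball.1 hxp).le
  apply hεV
  calc dist (g m.1 x) (g m.2 x)
      ≤ dist (g m.1 x) (g m.1 p) + dist (g m.1 p) (g m.2 p) + dist (g m.2 p) (g m.2 x) :=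
        dist_triangle4 _ _ _ _
    _ ≤ L * dist x p + ε / 3 + L * dist p x := by
        gcongr
        · exact (hg _).dist_le_mul x hxT p hpT
        · exact (hm p hpF).le
        · exact (hg _).dist_le_mul p hpT x hxT
    _ < ε := by rw [dist_comm p x]; linarith

lemma ConvexOn.lipschitzOnWith_Ioo {f : ℝ → ℝ} {a b δ M : ℝ} (hf : ConvexOn ℝ (Ioo a b) f)
    (hδ : 0 < δ) (hM : ∀ x ∈ Ioo a b, |f x| ≤ M) :
    LipschitzOnWith (2 * M / δ).toNNReal f (Ioo (a + δ) (b - δ)) := by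
  have hball : ∀ r, Metric.ball ((a + b) / 2) ((b - a) / 2 - r) = Ioo (a + r) (b - r) := by
    intro r
    rw [Real.ball_eq_Ioo]
    congr 1 <;> ring
  have hball₀ : Metric.ball ((a + b) / 2) ((b - a) / 2) = Ioo a b := by simpa using hball 0
  rw [← hball δ]
  exact (hball₀ ▸ hf).lipschitzOnWith_of_abs_le hδ fun x hx => hM x (hball₀ ▸ hx)

theorem exists_subseq_tendstoLocallyUniformlyOn_of_convexOn {f : ℕ → ℝ → ℝ} {a b M : ℝ}
    (hf : ∀ k, ConvexOn ℝ (Ioo a b) (f k)) (hM : ∀ k, ∀ x ∈ Ioo a b, |f k x| ≤ M) :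
    ∃ φ : ℕ → ℕ, ∃ v : ℝ → ℝ, StrictMono φ ∧
      TendstoLocallyUniformlyOn (fun j => f (φ j)) v atTop (Ioo a b) := by
  obtain ⟨D, hDc, hD⟩ := TopologicalSpace.exists_countable_dense ℝ
  obtain ⟨φ, hφ, hlim⟩ :=
    exists_subseq_tendsto_of_countable (hDc.mono inter_subset_left) fun k x hx => hM k x hx.2
  have hunif : ∀ δ > 0, UniformCauchySeqOn (fun j => f (φ j)) atTop (Icc (a + δ) (b - δ)) := by
    intro δ hδ
    refine uniformCauchySeqOn_of_lipschitzOnWith isCompact_Icc (half_pos hδ) ?_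
      (fun j => (hf (φ j)).lipschitzOnWith_Ioo (half_pos hδ) (hM (φ j))) hD fun p hp => ?_
    · intro y hy
      obtain ⟨z, hz, hyz⟩ := Metric.mem_thickening_iff.1 hy
      rw [Real.dist_eq, abs_lt] at hyz
      constructor <;> linarith [hz.1, hz.2]
    · obtain ⟨L, hL⟩ := hlim p ⟨hp.1, Ioo_subset_Ioo (by linarith) (by linarith) hp.2⟩
      exact hL.cauchySeq
  refine ⟨φ, fun x => limUnder atTop fun j => f (φ j) x, hφ,
    tendstoLocallyUniformlyOn_of_forall_exists_nhds fun x hx => ?_⟩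
  obtain ⟨δ, hδ, hxa, hxb⟩ : ∃ δ > 0, a + δ < x ∧ x < b - δ :=
    ⟨min (x - a) (b - x) / 2, by have := hx.1; have := hx.2; positivity,
      by linarith [min_le_left (x - a) (b - x), hx.1],
      by linarith [min_le_right (x - a) (b - x), hx.2]⟩
  exact ⟨Icc (a + δ) (b - δ), mem_nhdsWithin_of_mem_nhds (Icc_mem_nhds hxa hxb),
    (hunif δ hδ).tendstoUniformlyOn_of_tendsto fun y hy =>
      ((hunif δ hδ).cauchySeq hy).tendsto_limUnder⟩

lemma convexOn_of_tendsto {E ι : Type*} [AddCommGroup E] [Module ℝ E] {l : Filter ι} [l.NeBot]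
    {F : ι → E → ℝ} {f : E → ℝ} {s : Set E} (hF : ∀ i, ConvexOn ℝ s (F i))
    (hlim : ∀ x ∈ s, Tendsto (fun i => F i x) l (𝓝 (f x))) : ConvexOn ℝ s f := by
  obtain ⟨i⟩ := l.nonempty_of_neBot
  refine ⟨(hF i).1, fun x hx y hy θ η hθ hη hθη => ?_⟩
  exact le_of_tendsto_of_tendsto (hlim _ ((hF i).1 hx hy hθ hη hθη))
    (((hlim x hx).const_smul θ).add ((hlim y hy).const_smul η))
    (Eventually.of_forall fun j => (hF j).2 hx hy hθ hη hθη)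

lemma ConvexOn.convexOn_of_subset_closure {E : Type*} [TopologicalSpace E] [AddCommGroup E]
    [Module ℝ E] [ContinuousAdd E] [ContinuousSMul ℝ E] {s t : Set E} {f : E → ℝ}
    (hf : ConvexOn ℝ t f) (hs : Convex ℝ s) (hts : t ⊆ s) (hst : s ⊆ closure t)
    (hcont : ContinuousOn f s) : ConvexOn ℝ s f := by
  refine ⟨hs, fun x hx y hy θ η hθ hη hθη => ?_⟩
  have hxy : (x, y) ∈ closure (t ×ˢ t) := by
    rw [closure_prod_eq]
    exact ⟨hst hx, hst hy⟩
  have hcomb : ContinuousOn (fun p : E × E => f (θ • p.1 + η • p.2)) (s ×ˢ s) :=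
    hcont.comp (by fun_prop) fun p hp => hs hp.1 hp.2 hθ hη hθη
  have hsum : ContinuousOn (fun p : E × E => θ • f p.1 + η • f p.2) (s ×ˢ s) :=
    ((hcont.comp continuousOn_fst fun p hp => hp.1).const_smul θ).add
      ((hcont.comp continuousOn_snd fun p hp => hp.2).const_smul η)
  exact ContinuousWithinAt.closure_le hxy ((hcomb _ ⟨hx, hy⟩).mono (prod_mono hts hts))
    ((hsum _ ⟨hx, hy⟩).mono (prod_mono hts hts)) fun p hp => hf.2 hp.1 hp.2 hθ hη hθη

section Endpoints

variable {f : ℝ → ℝ} {a b : ℝ}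

lemma ConvexOn.exists_tendsto_nhdsGT (hab : a < b) (hf : ConvexOn ℝ (Ioo a b) f)
    (hbdd : BddAbove (f '' Ioo a b)) : ∃ L, Tendsto f (𝓝[>] a) (𝓝 L) := by
  obtain ⟨B, hB⟩ := hbdd
  obtain ⟨c, hac, hcb⟩ := exists_between hab
  obtain ⟨m, ham, hmc⟩ := exists_between hac
  have hc : c ∈ Ioo a b := ⟨hac, hcb⟩
  have hmono : MonotoneOn (slope f c) (Ioo a m) :=
    (hf.slope_mono hc).mono fun x hx => ⟨⟨hx.1, by linarith [hx.2]⟩, (hx.2.trans hmc).ne⟩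
  -- on `(a, m)` we have `f ≤ B` and `c - x ≥ c - m`, which bounds the slopes from `c` below
  have hslope : BddBelow (slope f c '' Ioo a m) := by
    refine ⟨(f c - B) / (c - m), forall_mem_image.2 fun x hx => ?_⟩
    have hfx : f x ≤ B := hB (mem_image_of_mem f ⟨hx.1, by linarith [hx.2]⟩)
    have hfc : f c ≤ B := hB (mem_image_of_mem f hc)
    rw [slope_comm, slope_def_field, div_le_div_iff₀ (by linarith) (by linarith [hx.2])]
    nlinarith [mul_nonneg (sub_nonneg.2 hfc) (sub_nonneg.2 hx.2.le),
      mul_nonneg (sub_nonneg.2 hfx) (sub_nonneg.2 hmc.le)]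
  obtain ⟨S, hS⟩ : ∃ S, Tendsto (slope f c) (𝓝[>] a) (𝓝 S) :=
    ⟨_, hmono.tendsto_nhdsWithin_Ioo_right (nonempty_Ioo.2 ham) hslope⟩
  refine ⟨S * (a - c) + f c, ((hS.mul ((tendsto_id.sub_const c).mono_left
    nhdsWithin_le_nhds)).add_const (f c)).congr' ?_⟩
  filter_upwards [Ioo_mem_nhdsGT hac] with x hx
  simp only [id, slope_def_field]
  rw [div_mul_cancel₀ _ (sub_ne_zero.2 hx.2.ne)]
  ring

lemma ConvexOn.exists_tendsto_nhdsLT (hab : a < b) (hf : ConvexOn ℝ (Ioo a b) f)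
    (hbdd : BddAbove (f '' Ioo a b)) : ∃ L, Tendsto f (𝓝[<] b) (𝓝 L) := by
  have hneg : ConvexOn ℝ (Ioo (-b) (-a)) (fun x => f (-x)) := by
    have hpre : (-LinearMap.id : ℝ →ₗ[ℝ] ℝ) ⁻¹' Ioo a b = Ioo (-b) (-a) := by
      ext x
      simp only [mem_preimage, LinearMap.neg_apply, LinearMap.id_apply, mem_Ioo]
      constructor <;> intro h <;> constructor <;> linarith [h.1, h.2]
    exact hpre ▸ hf.comp_linearMap (-LinearMap.id)
  have himage : (fun x => f (-x)) '' Ioo (-b) (-a) = f '' Ioo a b := by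
    rw [← image_image f Neg.neg, image_neg_Ioo, neg_neg, neg_neg]
  obtain ⟨L, hL⟩ := hneg.exists_tendsto_nhdsGT (neg_lt_neg hab) (himage ▸ hbdd)
  exact ⟨L, by simpa [Function.comp_def] using hL.comp tendsto_neg_nhdsLT_neg⟩

lemma ConvexOn.exists_tendsto_nhdsWithin_Ioo (hab : a < b) (hf : ConvexOn ℝ (Ioo a b) f)
    (hbdd : BddAbove (f '' Ioo a b)) {x : ℝ} (hx : x ∈ Icc a b) :
    ∃ L, Tendsto f (𝓝[Ioo a b] x) (𝓝 L) := by
  rcases hx.1.eq_or_lt with rfl | hax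
  · obtain ⟨L, hL⟩ := hf.exists_tendsto_nhdsGT hab hbdd
    exact ⟨L, hL.mono_left (nhdsWithin_mono _ Ioo_subset_Ioi_self)⟩
  rcases hx.2.eq_or_lt with rfl | hxb
  · obtain ⟨L, hL⟩ := hf.exists_tendsto_nhdsLT hab hbdd
    exact ⟨L, hL.mono_left (nhdsWithin_mono _ Ioo_subset_Iio_self)⟩
  exact ⟨f x, hf.continuousOn isOpen_Ioo x ⟨hax, hxb⟩⟩

lemma ConvexOn.eqOn_extendFrom_Ioo (hf : ConvexOn ℝ (Ioo a b) f) :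
    EqOn (extendFrom (Ioo a b) f) f (Ioo a b) :=
  extendFrom_extends (hf.continuousOn isOpen_Ioo)

lemma ConvexOn.continuousOn_extendFrom_Ioo (hab : a < b) (hf : ConvexOn ℝ (Ioo a b) f)
    (hbdd : BddAbove (f '' Ioo a b)) : ContinuousOn (extendFrom (Ioo a b) f) (Icc a b) :=
  continuousOn_extendFrom (closure_Ioo hab.ne).ge fun _ hx =>
    hf.exists_tendsto_nhdsWithin_Ioo hab hbdd hx

lemma ConvexOn.convexOn_extendFrom_Ioo (hab : a < b) (hf : ConvexOn ℝ (Ioo a b) f)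
    (hbdd : BddAbove (f '' Ioo a b)) : ConvexOn ℝ (Icc a b) (extendFrom (Ioo a b) f) :=
  (hf.congr hf.eqOn_extendFrom_Ioo.symm).convexOn_of_subset_closure
    (convex_Icc a b) Ioo_subset_Icc_self (closure_Ioo hab.ne).ge
    (hf.continuousOn_extendFrom_Ioo hab hbdd)

end Endpoints

theorem exists_convexOn_Icc_subseq_tendstoLocallyUniformlyOn {f : ℕ → ℝ → ℝ} {a b M : ℝ}
    (hab : a < b) (hf : ∀ k, ConvexOn ℝ (Ioo a b) (f k))
    (hM : ∀ k, ∀ x ∈ Ioo a b, |f k x| ≤ M) :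
    ∃ u : ℝ → ℝ, ∃ φ : ℕ → ℕ, StrictMono φ ∧ ContinuousOn u (Icc a b) ∧
      ConvexOn ℝ (Icc a b) u ∧
      TendstoLocallyUniformlyOn (fun j => f (φ j)) u atTop (Ioo a b) := by
  obtain ⟨φ, v, hφ, hv⟩ := exists_subseq_tendstoLocallyUniformlyOn_of_convexOn hf hM
  have hvconv : ConvexOn ℝ (Ioo a b) v :=
    convexOn_of_tendsto (fun j => hf (φ j)) fun x hx => hv.tendsto_at hx
  have hvbdd : BddAbove (v '' Ioo a b) := ⟨M, forall_mem_image.2 fun x hx =>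
    le_of_tendsto' (hv.tendsto_at hx) fun j => (abs_le.1 (hM (φ j) x hx)).2⟩
  exact ⟨extendFrom (Ioo a b) v, φ, hφ, hvconv.continuousOn_extendFrom_Ioo hab hvbdd,
    hvconv.convexOn_extendFrom_Ioo hab hvbdd, hv.congr_right hvconv.eqOn_extendFrom_Ioo.symm⟩

theorem stmt_3_general
    (M : ℕ → Finset ℝ)
    (hM0 : ∀ k, (0 : ℝ) ∈ M k) (hM1 : ∀ k, (1 : ℝ) ∈ M k)
    (M₀ : ℝ)
    (u_ : ℕ → ℝ → ℝ)
    (hconv : ∀ k, ∀ a ∈ M k, ∀ b ∈ M k, ∀ c ∈ M k, a < b → b < c →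
      (∀ p ∈ M k, ¬(a < p ∧ p < b)) → (∀ p ∈ M k, ¬(b < p ∧ p < c)) →
      (u_ k b - u_ k a) / (b - a) ≤ (u_ k c - u_ k b) / (c - b))
    (hbdd : ∀ k, ∀ p ∈ M k, |u_ k p| ≤ M₀)
    (U : ℕ → ℝ → ℝ)
    (hUmesh : ∀ k, ∀ p ∈ M k, U k p = u_ k p)
    (hUaff : ∀ k, ∀ a ∈ M k, ∀ b ∈ M k, a < b →
      (∀ c ∈ M k, ¬(a < c ∧ c < b)) →
      ∃ m q : ℝ, ∀ t ∈ Icc a b, U k t = m * t + q) :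
    ∃ u : ℝ → ℝ, ∃ φ : ℕ → ℕ, StrictMono φ ∧
      ContinuousOn u (Icc (0 : ℝ) 1) ∧ ConvexOn ℝ (Icc (0 : ℝ) 1) u ∧
      ∀ K : Set ℝ, K ⊆ Ioo (0 : ℝ) 1 → IsCompact K →
        TendstoUniformlyOn (fun j => U (φ j)) u atTop K := by
  have hdisc : ∀ k, DiscreteConvexOn (M k) (u_ k) := fun k a b c hab hbc => by
    simpa only [slope_def_field] using hconv k a hab.left_mem b hab.right_mem c hbc.right_mem
      hab.lt hbc.lt hab.notMem hbc.notMem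
  have hinterp : ∀ k, IsPiecewiseLinearInterpolant (M k) (u_ k) (U k) := fun k a b hab =>
    eq_secantLine_of_affine hab.lt (hUmesh k a hab.left_mem) (hUmesh k b hab.right_mem)
      (hUaff k a hab.left_mem b hab.right_mem hab.lt hab.notMem)
  obtain ⟨u, φ, hφ, hcont, hconvex, hlim⟩ :=
    exists_convexOn_Icc_subseq_tendstoLocallyUniformlyOn one_pos
      (fun k => ((hdisc k).convexOn_Icc (hinterp k) (hM0 k) (hM1 k) one_pos).subset
        Ioo_subset_Icc_self (convex_Ioo 0 1))
      fun k x hx => (hinterp k).abs_le_of_abs_le (hM0 k) (hM1 k) one_pos (hbdd k)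
        (Ioo_subset_Icc_self hx)
  exact ⟨u, φ, hφ, hcont, hconvex,
    (tendstoLocallyUniformlyOn_iff_forall_isCompact isOpen_Ioo).1 hlim⟩

/-- Given a sequence of nested subdivisions `M k` of `[0,1]` with maximal
steps `h k ↓ 0`, and discrete functions `u_ k` on `M k` satisfying the discrete
convexity inequalities and uniformly bounded by `M₀`, with piecewise linear extensions
`U k`, there is a subsequence of `(U k)` converging to a continuous convex function `u`
on `[0,1]`, uniformly on every compact subset of `(0,1)`. -/
theorem stmt_3
    (h : ℕ → ℝ) (hpos : ∀ k, 0 < h k) (hanti : StrictAnti h)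
    (hlim : Tendsto h atTop (nhds 0))
    (M : ℕ → Finset ℝ)
    (hM0 : ∀ k, (0 : ℝ) ∈ M k) (hM1 : ∀ k, (1 : ℝ) ∈ M k)
    (hMQ : ∀ k, ∀ p ∈ M k, p ∈ Icc (0 : ℝ) 1)
    (hstep : ∀ k, ∀ a ∈ M k, ∀ b ∈ M k, a < b →
      (∀ c ∈ M k, ¬(a < c ∧ c < b)) → b - a ≤ h k)
    (hnested : ∀ k l, k ≤ l → M k ⊆ M l)
    (M₀ : ℝ) (hM₀ : 0 < M₀)
    (u_ : ℕ → ℝ → ℝ)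
    (hconv : ∀ k, ∀ a ∈ M k, ∀ b ∈ M k, ∀ c ∈ M k, a < b → b < c →
      (∀ p ∈ M k, ¬(a < p ∧ p < b)) → (∀ p ∈ M k, ¬(b < p ∧ p < c)) →
      (u_ k b - u_ k a) / (b - a) ≤ (u_ k c - u_ k b) / (c - b))
    (hbdd : ∀ k, ∀ p ∈ M k, |u_ k p| ≤ M₀)
    (U : ℕ → ℝ → ℝ)
    (hUmesh : ∀ k, ∀ p ∈ M k, U k p = u_ k p)
    (hUaff : ∀ k, ∀ a ∈ M k, ∀ b ∈ M k, a < b →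
      (∀ c ∈ M k, ¬(a < c ∧ c < b)) →
      ∃ m q : ℝ, ∀ t ∈ Icc a b, U k t = m * t + q) :
    ∃ u : ℝ → ℝ, ∃ φ : ℕ → ℕ, StrictMono φ ∧
      ContinuousOn u (Icc (0 : ℝ) 1) ∧ ConvexOn ℝ (Icc (0 : ℝ) 1) u ∧
      ∀ K : Set ℝ, K ⊆ Ioo (0 : ℝ) 1 → IsCompact K →
        TendstoUniformlyOn (fun j => U (φ j)) u atTop K :=
  stmt_3_general M hM0 hM1 M₀ u_ hconv hbdd U hUmesh hUaff
end

section
/- Let d = 2, h = 1/2, and let u be the function on the 3×3 grid M_{1/2} ⊂ [0,1]² defined by u(0,1) = 1, u(1/2,1) = 1, u(1,1) = 1, u(0,1/2) = 1/2, u(1/2,1/2) = 5/8, u(1,1/2) = 1, u(0,0) = 0, u(1/2,0) = 1/2, u(1,0) = 1. Then the discrete Hessian H_{1/2} u(1/2,1/2) equals the matrix [[1, −1], [−1, 1]], which is positive semidefinite; nevertheless (u(0,0) + u(1,1))/2 = 1/2 < 5/8 = u(1/2,1/2), so u is not midpoint-convex along the diagonal and hence is not the restriction of any convex function on [0,1]².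 -/
open Set

/-!
The discrete Hessian only sees the five-point and cross stencils at the centre, and
there it equals the rank-one matrix `w wᵀ` with `w = (1, -1)`, so it is positive
semidefinite. Convexity, however, also constrains the diagonal through the centre:
any convex `v` on the square satisfies `v (1/2, 1/2) ≤ (v (0, 0) + v (1, 1)) / 2 = 1/2`,
which `u (1/2, 1/2) = 5/8` violates.
-/

theorem ConvexOn.map_midpoint_le {𝕜 E : Type*} [Field 𝕜] [LinearOrder 𝕜] [IsStrictOrderedRing 𝕜]
    [AddCommGroup E] [Module 𝕜 E] {s : Set E} {f : E → 𝕜} (hf : ConvexOn 𝕜 s f)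
    {x y : E} (hx : x ∈ s) (hy : y ∈ s) :
    f (midpoint 𝕜 x y) ≤ (f x + f y) / 2 := by
  have h := hf.2 hx hy (by norm_num : (0 : 𝕜) ≤ 1 / 2) (by norm_num : (0 : 𝕜) ≤ 1 / 2)
    (by norm_num)
  rw [← smul_add, smul_eq_mul, smul_eq_mul] at h
  rw [midpoint_eq_smul_add, invOf_eq_inv, ← one_div]
  linarith

theorem Matrix.posSemidef_one_neg_one_neg_one_one {R : Type*} [CommRing R] [PartialOrder R]
    [StarRing R] [StarOrderedRing R] :
    (!![1, -1; -1, 1] : Matrix (Fin 2) (Fin 2) R).PosSemidef := by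
  convert Matrix.posSemidef_vecMulVec_self_star ![(1 : R), -1] using 1
  ext i j
  fin_cases i <;> fin_cases j <;> simp [Matrix.vecMulVec]

/-- For the discrete function `u` on the 3×3 grid `M_{1/2} ⊂ [0,1]²` with
the indicated values, the discrete Hessian at the interior point `(1/2,1/2)` (with
`h = 1/2`) equals `[[1,-1],[-1,1]]`, which is positive semidefinite; nevertheless
`(u(0,0)+u(1,1))/2 = 1/2 < 5/8 = u(1/2,1/2)`, so `u` is not midpoint convex along the
diagonal, and `u` is not the restriction to the grid of any convex function on `[0,1]²`. -/
theorem stmt_4 (u : ℝ → ℝ → ℝ)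
    (h01 : u 0 1 = 1) (h51 : u (1/2) 1 = 1) (h11 : u 1 1 = 1)
    (h05 : u 0 (1/2) = 1/2) (h55 : u (1/2) (1/2) = 5/8) (h15 : u 1 (1/2) = 1)
    (h00 : u 0 0 = 0) (h50 : u (1/2) 0 = 1/2) (h10 : u 1 0 = 1) :
    (!![(u 1 (1/2) - 2 * u (1/2) (1/2) + u 0 (1/2)) / (1/2 : ℝ)^2,
        (u 1 1 - u 0 1 - u 1 0 + u 0 0) / (4 * (1/2 : ℝ)^2);
        (u 1 1 - u 0 1 - u 1 0 + u 0 0) / (4 * (1/2 : ℝ)^2),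
        (u (1/2) 1 - 2 * u (1/2) (1/2) + u (1/2) 0) / (1/2 : ℝ)^2]
      = (!![1, -1; -1, 1] : Matrix (Fin 2) (Fin 2) ℝ)) ∧
    (!![1, -1; -1, 1] : Matrix (Fin 2) (Fin 2) ℝ).PosSemidef ∧
    ((u 0 0 + u 1 1) / 2 = 1/2 ∧ (1/2 : ℝ) < 5/8 ∧ u (1/2) (1/2) = 5/8) ∧
    ¬ ∃ v : ℝ × ℝ → ℝ,
        ConvexOn ℝ (Icc (0 : ℝ) 1 ×ˢ Icc (0 : ℝ) 1) v ∧
        ∀ p ∈ ({0, 1/2, 1} : Set ℝ), ∀ q ∈ ({0, 1/2, 1} : Set ℝ),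
          v (p, q) = u p q := by
  have diagonal_mean : (u 0 0 + u 1 1) / 2 = 1/2 := by rw [h00, h11]; norm_num
  refine ⟨?_, Matrix.posSemidef_one_neg_one_neg_one_one, ⟨diagonal_mean, by norm_num, h55⟩, ?_⟩
  · rw [h01, h51, h11, h05, h55, h15, h00, h50, h10]
    norm_num [← Matrix.ext_iff, Fin.forall_fin_two]
  · rintro ⟨v, hv, hvu⟩
    have diag_mem (t : ℝ) (ht : t ∈ Icc (0 : ℝ) 1) : (t, t) ∈ Icc (0 : ℝ) 1 ×ˢ Icc (0 : ℝ) 1 :=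
      ⟨ht, ht⟩
    have h := hv.map_midpoint_le (diag_mem 0 (by norm_num)) (diag_mem 1 (by norm_num))
    have hmid : midpoint ℝ ((0 : ℝ), (0 : ℝ)) (1, 1) = (1/2, 1/2) := by
      simp [midpoint_eq_smul_add]
    rw [hmid, hvu _ (by simp) _ (by simp), hvu _ (by simp) _ (by simp),
      hvu _ (by simp) _ (by simp), h55, diagonal_mean] at h
    norm_num at h
end

section
/- Let u : Q = [0,1]^d → ℝ be a convex function of class C³. Then for every ε > 0 there exists h₀ = h₀(u,ε) > 0 such that for every h = 1/n with 0 < h < h₀ there exists a function u_h : M_h → ℝ satisfying, for all x ∈ M_h, |u_h(x) − u(x)| + Σ_{i=1}^d |D_{h,i}u_h(x) − ∂_i u(x)| + Σ_{1≤i≤j≤d} |D²_{h,ij}u_h(x) − ∂²_{ij}u(x)| < ε (where for boundary mesh points only the finite differences that are defined at x are included), and such that H_h u_h(x) is positive semidefinite for all interior mesh points x ∈ M̊_h. -/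
/-!
Take `u_h = u + δ |x|²`. Since `u ∈ C³` on the compact cube, Taylor's formula holds there with a
uniform constant `M`, so the forward and centred differences of `u` are within `O(M h)` of its
first and second derivatives. Adding `δ |x|²` shifts `D_{h,i}` by `δ (2 x_i + h)`, the pure second
differences by `2δ` and the mixed ones not at all. Convexity makes the Hessian of `u` positive
semidefinite at interior points, so `H_h u_h = ∇²u + 2δ I + O(M h)` is positive semidefinite as
soon as `d · O(M h) ≤ 2δ`; choosing `δ` and then `h₀` small makes all errors smaller than `ε`.
-/

open Set Filter
open scoped Classical

namespace Stmt12

variable (d : ℕ)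

/-- The cube `Q = [0,1]^d`. -/
def Q : Set (Fin d → ℝ) := Icc 0 1

/-- The canonical basis vector `e i`. -/
def ee (i : Fin d) : Fin d → ℝ := Pi.single i 1

/-- `x` belongs to the mesh `M_h`, i.e. `x ∈ Q` and `x = h • z` for some `z ∈ ℤ^d`. -/
def onMesh (h : ℝ) (x : Fin d → ℝ) : Prop :=
  x ∈ Icc (0 : Fin d → ℝ) 1 ∧ ∀ i, ∃ z : ℤ, x i = h * z

/-- `x` is an interior mesh point: `x ∈ M_h ∩ (0,1)^d`. -/
def inMesh (h : ℝ) (x : Fin d → ℝ) : Prop :=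
  onMesh d h x ∧ ∀ i, 0 < x i ∧ x i < 1

/-- First order forward finite difference `D_{h,i} u (x)`. -/
noncomputable def D1 (h : ℝ) (u : (Fin d → ℝ) → ℝ) (x : Fin d → ℝ) (i : Fin d) : ℝ :=
  (u (x + h • ee d i) - u x) / h

/-- Second order finite differences `D²_{h,ij} u (x)`. -/
noncomputable def D2 (h : ℝ) (u : (Fin d → ℝ) → ℝ) (x : Fin d → ℝ) (i j : Fin d) : ℝ :=
  if i = j then (u (x + h • ee d i) - 2 * u x + u (x - h • ee d i)) / h ^ 2
  else
    (u (x + h • ee d i + h • ee d j) - u (x - h • ee d i + h • ee d j) -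
        u (x + h • ee d i - h • ee d j) + u (x - h • ee d i - h • ee d j)) /
      (4 * h ^ 2)

/-- The points needed for `D²_{h,ij} u (x)` all lie in the mesh `M_h`. -/
def D2defined (h : ℝ) (x : Fin d → ℝ) (i j : Fin d) : Prop :=
  if i = j then onMesh d h (x + h • ee d i) ∧ onMesh d h (x - h • ee d i)
  else
    onMesh d h (x + h • ee d i + h • ee d j) ∧ onMesh d h (x - h • ee d i + h • ee d j) ∧
      onMesh d h (x + h • ee d i - h • ee d j) ∧ onMesh d h (x - h • ee d i - h • ee d j)

/-- The discrete Hessian `H_h u (x)`. -/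
noncomputable def Hd (h : ℝ) (u : (Fin d → ℝ) → ℝ) (x : Fin d → ℝ) : Matrix (Fin d) (Fin d) ℝ :=
  Matrix.of fun i j => D2 d h u x i j

/-- First partial derivative `∂_i u` (derivative taken within `Q`). -/
noncomputable def pd (u : (Fin d → ℝ) → ℝ) (i : Fin d) (y : Fin d → ℝ) : ℝ :=
  fderivWithin ℝ u (Q d) y (ee d i)

/-- Second partial derivative `∂²_{ij} u` (derivatives taken within `Q`). -/
noncomputable def pd2 (u : (Fin d → ℝ) → ℝ) (i j : Fin d) (y : Fin d → ℝ) : ℝ :=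
  fderivWithin ℝ (fun z => pd d u j z) (Q d) y (ee d i)

end Stmt12

open Topology
open scoped Matrix

theorem abs_div_sub_le_of_abs_sub_mul_le {a b c K : ℝ} (hc : 0 < c) (h : |a - c * b| ≤ c * K) :
    |a / c - b| ≤ K := by
  rw [show a / c - b = (a - c * b) / c by field_simp, abs_div, abs_of_pos hc, div_le_iff₀ hc]
  linarith

section Taylor

variable {E F : Type*} [NormedAddCommGroup E] [NormedSpace ℝ E]
  [NormedAddCommGroup F] [NormedSpace ℝ F]
  {s : Set E} {f : E → F} {f' : E → E →L[ℝ] F} {x y : E} {M : ℝ}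

theorem Convex.norm_taylor_one_le (hs : Convex ℝ s) (hM : 0 ≤ M)
    (hf : ∀ z ∈ s, HasFDerivWithinAt f (f' z) s z)
    (hf' : ∀ z ∈ s, ‖f' z - f' x‖ ≤ M * ‖z - x‖) (hx : x ∈ s) (hy : y ∈ s) :
    ‖f y - f x - f' x (y - x)‖ ≤ M * ‖y - x‖ ^ 2 := by
  have hseg := hs.segment_subset hx hy
  have := (convex_segment x y).norm_image_sub_le_of_norm_hasFDerivWithin_le'
    (fun z hz => (hf z (hseg hz)).mono hseg)
    (fun z hz => (hf' z (hseg hz)).trans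
      (mul_le_mul_of_nonneg_left (norm_sub_le_of_mem_segment hz) hM))
    (left_mem_segment ℝ x y) (right_mem_segment ℝ x y)
  linarith

theorem hasFDerivWithinAt_half_apply_sub_sub {f'' : E →L[ℝ] E →L[ℝ] F}
    (hsymm : ∀ v w, f'' v w = f'' w v) (t : Set E) (z : E) :
    HasFDerivWithinAt (fun w => (1 / 2 : ℝ) • f'' (w - x) (w - x)) (f'' (z - x)) t z := by
  have hlin : HasFDerivWithinAt (fun w => w - x) (ContinuousLinearMap.id ℝ E) t z :=
    (hasFDerivWithinAt_id z _).sub_const x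
  have hc := f''.hasFDerivAt.comp_hasFDerivWithinAt z hlin
  refine ((hc.clm_apply hlin).const_smul (1 / 2 : ℝ)).congr_fderiv ?_
  ext w
  simp only [smul_apply, add_apply, ContinuousLinearMap.coe_comp, Function.comp_apply,
    ContinuousLinearMap.coe_id', id_eq, ContinuousLinearMap.flip_apply, hsymm w (z - x),
    ← two_smul ℝ, smul_smul]
  norm_num

/-- Mean value inequality for `f - ½ f'' x (· - x) (· - x)`, whose derivative differs from
`f' x` by the first-order remainder of `f'`. -/
theorem Convex.norm_taylor_two_le (hs : Convex ℝ s) (hM : 0 ≤ M)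
    {f'' : E → E →L[ℝ] E →L[ℝ] F}
    (hf : ∀ z ∈ s, HasFDerivWithinAt f (f' z) s z)
    (hf' : ∀ z ∈ s, HasFDerivWithinAt f' (f'' z) s z)
    (hf'' : ∀ z ∈ s, ‖f'' z - f'' x‖ ≤ M * ‖z - x‖)
    (hsymm : ∀ v w, f'' x v w = f'' x w v) (hx : x ∈ s) (hy : y ∈ s) :
    ‖f y - f x - f' x (y - x) - (1 / 2 : ℝ) • f'' x (y - x) (y - x)‖ ≤ M * ‖y - x‖ ^ 3 := by
  have hseg := hs.segment_subset hx hy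
  have hbound : ∀ z ∈ segment ℝ x y, ‖f' z - f'' x (z - x) - f' x‖ ≤ M * ‖y - x‖ ^ 2 := by
    intro z hz
    calc ‖f' z - f'' x (z - x) - f' x‖ ≤ M * ‖z - x‖ ^ 2 := by
          simpa [sub_right_comm] using hs.norm_taylor_one_le hM hf' hf'' hx (hseg hz)
      _ ≤ M * ‖y - x‖ ^ 2 := by gcongr; exact norm_sub_le_of_mem_segment hz
  have := (convex_segment x y).norm_image_sub_le_of_norm_hasFDerivWithin_le'
    (fun z hz => ((hf z (hseg hz)).mono hseg).sub (hasFDerivWithinAt_half_apply_sub_sub hsymm _ z))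
    hbound (left_mem_segment ℝ x y) (right_mem_segment ℝ x y)
  calc _ = ‖(f y - (1 / 2 : ℝ) • f'' x (y - x) (y - x))
        - (f x - (1 / 2 : ℝ) • f'' x (x - x) (x - x)) - f' x (y - x)‖ := by
        congr 1
        simp only [sub_self, map_zero, smul_zero]
        abel
    _ ≤ M * ‖y - x‖ ^ 2 * ‖y - x‖ := this
    _ = M * ‖y - x‖ ^ 3 := by ring

end Taylor

section TaylorBounds

variable {E : Type*} [NormedAddCommGroup E] [NormedSpace ℝ E]

def HasTaylorBounds (s : Set E) (f : E → ℝ) (M : ℝ) : Prop :=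
  ∀ x ∈ s, ∀ y ∈ s,
    |f y - f x - fderivWithin ℝ f s x (y - x)| ≤ M * ‖y - x‖ ^ 2 ∧
    |f y - f x - fderivWithin ℝ f s x (y - x)
        - 1 / 2 * fderivWithin ℝ (fderivWithin ℝ f s) s x (y - x) (y - x)| ≤ M * ‖y - x‖ ^ 3

variable {s : Set E} {f : E → ℝ}

theorem ContDiffOn.isSymmSndFDerivWithinAt_of_convex (hs : Convex ℝ s)
    (hsi : (interior s).Nonempty) (hf : ContDiffOn ℝ 2 f s) {x : E} (hx : x ∈ s) :
    IsSymmSndFDerivWithinAt ℝ f s x := by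
  refine (hf x hx).isSymmSndFDerivWithinAt (by simp) (uniqueDiffOn_convex hs hsi) ?_ hx
  rw [hs.closure_interior_eq_closure_of_nonempty_interior hsi]
  exact subset_closure hx

/-- On a compact set, `C³` bounds the second and third derivatives, which makes the first
and second derivatives Lipschitz. -/
theorem ContDiffOn.exists_hasTaylorBounds (hs : Convex ℝ s) (hsc : IsCompact s)
    (hsi : (interior s).Nonempty) (hf : ContDiffOn ℝ 3 f s) :
    ∃ M, 0 < M ∧ HasTaylorBounds s f M := by
  have hud := uniqueDiffOn_convex hs hsi
  set f' := fderivWithin ℝ f s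
  set f'' := fderivWithin ℝ f' s
  have hc1 : ContDiffOn ℝ 2 f' s := hf.fderivWithin hud (by norm_num)
  have hc2 : ContDiffOn ℝ 1 f'' s := hc1.fderivWithin hud (by norm_num)
  obtain ⟨M₂, hM₂⟩ := hsc.exists_bound_of_continuousOn (E := E →L[ℝ] E →L[ℝ] ℝ) hc2.continuousOn
  obtain ⟨M₃, hM₃⟩ := hsc.exists_bound_of_continuousOn (hc2.continuousOn_fderivWithin hud le_rfl)
  set M := max (max M₂ M₃) 1
  have hM : 0 < M := lt_max_of_lt_right one_pos
  have hd0 : ∀ z ∈ s, HasFDerivWithinAt f (f' z) s z := fun z hz =>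
    (hf.differentiableOn (by norm_num) z hz).hasFDerivWithinAt
  have hd1 : ∀ z ∈ s, HasFDerivWithinAt f' (f'' z) s z := fun z hz =>
    (hc1.differentiableOn (by norm_num) z hz).hasFDerivWithinAt
  have hd2 : ∀ z ∈ s, HasFDerivWithinAt f'' (fderivWithin ℝ f'' s z) s z := fun z hz =>
    (hc2.differentiableOn one_ne_zero z hz).hasFDerivWithinAt
  refine ⟨M, hM, fun x hx y hy => ⟨?_, ?_⟩⟩
  · have hLip : ∀ z ∈ s, ‖f' z - f' x‖ ≤ M * ‖z - x‖ := fun z hz =>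
      hs.norm_image_sub_le_of_norm_hasFDerivWithin_le hd1
        (fun w hw => (hM₂ w hw).trans ((le_max_left _ _).trans (le_max_left _ _))) hx hz
    simpa using hs.norm_taylor_one_le hM.le hd0 hLip hx hy
  · have hLip : ∀ z ∈ s, ‖f'' z - f'' x‖ ≤ M * ‖z - x‖ := fun z hz =>
      hs.norm_image_sub_le_of_norm_hasFDerivWithin_le hd2
        (fun w hw => (hM₃ w hw).trans ((le_max_right _ _).trans (le_max_left _ _))) hx hz
    have hsymm := (hf.of_le (by norm_num)).isSymmSndFDerivWithinAt_of_convex hs hsi hx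
    simpa using hs.norm_taylor_two_le hM.le hd0 hd1 hLip hsymm hx hy

end TaylorBounds

section SecondDifferences

variable {E : Type*} [NormedAddCommGroup E] [NormedSpace ℝ E]
  {s : Set E} {f : E → ℝ} {x : E} {f' : E →L[ℝ] ℝ} {f'' : E →L[ℝ] E →L[ℝ] ℝ} {M : ℝ}

theorem abs_second_diff_sub_le
    (hT : ∀ y ∈ s, |f y - f x - f' (y - x) - 1 / 2 * f'' (y - x) (y - x)| ≤ M * ‖y - x‖ ^ 3)
    {w : E} (hp : x + w ∈ s) (hm : x - w ∈ s) :
    |f (x + w) - 2 * f x + f (x - w) - f'' w w| ≤ 2 * M * ‖w‖ ^ 3 := by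
  have hA := hT _ hp
  have hB := hT _ hm
  simp only [add_sub_cancel_left, sub_sub_cancel_left, map_neg, neg_neg, norm_neg,
    neg_apply] at hA hB
  calc |f (x + w) - 2 * f x + f (x - w) - f'' w w|
      = |(f (x + w) - f x - f' w - 1 / 2 * f'' w w)
          + (f (x - w) - f x - -f' w - 1 / 2 * f'' w w)| := by ring_nf
    _ ≤ _ := abs_add_le _ _
    _ ≤ 2 * M * ‖w‖ ^ 3 := by linarith

/-- The mixed difference is the difference of the second differences along `w₁ + w₂` and
`w₁ - w₂`, and `f'' (w₁ + w₂) (w₁ + w₂) - f'' (w₁ - w₂) (w₁ - w₂) = 4 f'' w₁ w₂`. -/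
theorem abs_mixed_diff_sub_le
    (hT : ∀ y ∈ s, |f y - f x - f' (y - x) - 1 / 2 * f'' (y - x) (y - x)| ≤ M * ‖y - x‖ ^ 3)
    (hM : 0 ≤ M) {w₁ w₂ : E} (hsymm : f'' w₂ w₁ = f'' w₁ w₂)
    (h₁ : x + w₁ + w₂ ∈ s) (h₂ : x - w₁ + w₂ ∈ s) (h₃ : x + w₁ - w₂ ∈ s) (h₄ : x - w₁ - w₂ ∈ s) :
    |f (x + w₁ + w₂) - f (x - w₁ + w₂) - f (x + w₁ - w₂) + f (x - w₁ - w₂) - 4 * f'' w₁ w₂|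
      ≤ 4 * M * (‖w₁‖ + ‖w₂‖) ^ 3 := by
  have e₁ : x + (w₁ + w₂) = x + w₁ + w₂ := by abel
  have e₂ : x - (w₁ - w₂) = x - w₁ + w₂ := by abel
  have e₃ : x + (w₁ - w₂) = x + w₁ - w₂ := by abel
  have e₄ : x - (w₁ + w₂) = x - w₁ - w₂ := by abel
  have hA := abs_second_diff_sub_le hT (e₁ ▸ h₁) (e₄ ▸ h₄)
  have hB := abs_second_diff_sub_le hT (e₃ ▸ h₃) (e₂ ▸ h₂)
  rw [e₁, e₄] at hA
  rw [e₂, e₃] at hB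
  have hq : f'' (w₁ + w₂) (w₁ + w₂) - f'' (w₁ - w₂) (w₁ - w₂) = 4 * f'' w₁ w₂ := by
    simp only [map_add, map_sub, add_apply, sub_apply, hsymm]
    ring
  have hnp : ‖w₁ + w₂‖ ^ 3 ≤ (‖w₁‖ + ‖w₂‖) ^ 3 := by gcongr; exact norm_add_le _ _
  have hnm : ‖w₁ - w₂‖ ^ 3 ≤ (‖w₁‖ + ‖w₂‖) ^ 3 := by gcongr; exact norm_sub_le _ _
  calc _ = |(f (x + w₁ + w₂) - 2 * f x + f (x - w₁ - w₂) - f'' (w₁ + w₂) (w₁ + w₂))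
        - (f (x + w₁ - w₂) - 2 * f x + f (x - w₁ + w₂) - f'' (w₁ - w₂) (w₁ - w₂))| := by
        rw [← hq]; ring_nf
    _ ≤ _ := abs_sub _ _
    _ ≤ 4 * M * (‖w₁‖ + ‖w₂‖) ^ 3 := by nlinarith

theorem ConvexOn.add_sub_two_mul_nonneg (hf : ConvexOn ℝ s f) {w : E} (hp : x + w ∈ s)
    (hm : x - w ∈ s) : 0 ≤ f (x + w) - 2 * f x + f (x - w) := by
  have := hf.2 hp hm (by norm_num : (0 : ℝ) ≤ 1 / 2) (by norm_num : (0 : ℝ) ≤ 1 / 2)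
    (by norm_num)
  rw [show (1 / 2 : ℝ) • (x + w) + (1 / 2 : ℝ) • (x - w) = x by module, smul_eq_mul,
    smul_eq_mul] at this
  linarith

/-- Along `x ± t v` the second difference is `≥ 0` by convexity and equals
`t² f'' v v + O(t³)` by Taylor, so `f'' v v ≥ -O(t)` for all small `t > 0`. -/
theorem ConvexOn.apply_self_nonneg_of_taylor (hf : ConvexOn ℝ s f) (hx : x ∈ interior s)
    (hT : ∀ y ∈ s, |f y - f x - f' (y - x) - 1 / 2 * f'' (y - x) (y - x)| ≤ M * ‖y - x‖ ^ 3)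
    (v : E) : 0 ≤ f'' v v := by
  have hlim : Tendsto (fun t : ℝ => -(2 * M * ‖v‖ ^ 3) * t) (𝓝[>] 0) (𝓝 0) :=
    ((continuous_const_mul _).tendsto' 0 0 (mul_zero _)).mono_left nhdsWithin_le_nhds
  have hmem : ∀ᶠ t : ℝ in 𝓝 0, x + t • v ∈ s ∧ x - t • v ∈ s := by
    have hs := mem_interior_iff_mem_nhds.1 hx
    have hp : Tendsto (fun t : ℝ => x + t • v) (𝓝 0) (𝓝 x) :=
      (by fun_prop : Continuous fun t : ℝ => x + t • v).tendsto' 0 x (by simp)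
    have hm : Tendsto (fun t : ℝ => x - t • v) (𝓝 0) (𝓝 x) :=
      (by fun_prop : Continuous fun t : ℝ => x - t • v).tendsto' 0 x (by simp)
    exact (hp.eventually_mem hs).and (hm.eventually_mem hs)
  refine le_of_tendsto hlim ?_
  filter_upwards [self_mem_nhdsWithin, nhdsWithin_le_nhds hmem] with t (ht : 0 < t) ⟨hp, hm⟩
  have hconv := hf.add_sub_two_mul_nonneg hp hm
  have htay := abs_second_diff_sub_le hT hp hm
  simp only [map_smul, smul_apply, smul_eq_mul, norm_smul, Real.norm_eq_abs,
    abs_of_pos ht] at htay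
  have := (abs_le.1 htay).2
  nlinarith [mul_pos ht ht]

end SecondDifferences

namespace Matrix

variable {ι : Type*} [Fintype ι]

theorem abs_dotProduct_mulVec_le (A : Matrix ι ι ℝ) {c : ℝ} (hA : ∀ i j, |A i j| ≤ c)
    (v : ι → ℝ) : |v ⬝ᵥ A *ᵥ v| ≤ Fintype.card ι * c * (v ⬝ᵥ v) := by
  calc |v ⬝ᵥ A *ᵥ v| = |∑ i, ∑ j, v i * A i j * v j| := by
        simp only [dotProduct, mulVec, Finset.mul_sum, mul_assoc]
    _ ≤ ∑ i, ∑ j, |v i * A i j * v j| :=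
        (Finset.abs_sum_le_sum_abs _ _).trans
          (Finset.sum_le_sum fun i _ => Finset.abs_sum_le_sum_abs _ _)
    _ ≤ ∑ i, ∑ j, c / 2 * (v i * v i + v j * v j) := by
        gcongr with i _ j _
        have hc : 0 ≤ c := (abs_nonneg _).trans (hA i j)
        rw [abs_mul, abs_mul]
        nlinarith [two_mul_le_add_sq |v i| |v j|, hA i j, abs_mul_abs_self (v i),
          abs_mul_abs_self (v j), mul_nonneg (abs_nonneg (v i)) (abs_nonneg (v j))]
    _ = Fintype.card ι * c * (v ⬝ᵥ v) := by
        simp only [dotProduct, mul_add, Finset.sum_add_distrib, Finset.sum_const,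
          Finset.card_univ, nsmul_eq_mul, ← Finset.mul_sum]
        ring

theorem posSemidef_of_abs_sub_le [DecidableEq ι] {A G : Matrix ι ι ℝ} {r c : ℝ}
    (hA : A.IsHermitian) (hG : ∀ v, 0 ≤ v ⬝ᵥ G *ᵥ v) (hAG : ∀ i j, |(A - G - r • 1) i j| ≤ c)
    (hcr : Fintype.card ι * c ≤ r) : A.PosSemidef := by
  refine posSemidef_iff_dotProduct_mulVec.2 ⟨hA, fun v => ?_⟩
  have hsplit : v ⬝ᵥ A *ᵥ v = v ⬝ᵥ (A - G - r • 1) *ᵥ v + v ⬝ᵥ G *ᵥ v + r * (v ⬝ᵥ v) := by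
    simp only [sub_mulVec, smul_mulVec, one_mulVec, dotProduct_sub, dotProduct_smul, smul_eq_mul]
    ring
  have hE := (abs_le.1 ((A - G - r • 1).abs_dotProduct_mulVec_le hAG v)).1
  have hvv : 0 ≤ v ⬝ᵥ v := by simpa using dotProduct_star_self_nonneg v
  rw [star_trivial, hsplit]
  nlinarith [hG v]

end Matrix

namespace Stmt12

variable {d : ℕ}

theorem mem_Q_iff {x : Fin d → ℝ} : x ∈ Q d ↔ ∀ k, 0 ≤ x k ∧ x k ≤ 1 := by
  simp [Q, Pi.le_def, forall_and]

theorem mem_interior_Q {x : Fin d → ℝ} (hx : ∀ k, 0 < x k ∧ x k < 1) : x ∈ interior (Q d) := by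
  rw [Q, ← Set.pi_univ_Icc, interior_pi_set Set.finite_univ]
  simpa using hx

theorem interior_Q_nonempty : (interior (Q d)).Nonempty :=
  ⟨fun _ => 1 / 2, mem_interior_Q fun _ => by norm_num⟩

theorem sum_smul_ee (v : Fin d → ℝ) : ∑ i, v i • ee d i = v := by
  ext k
  simp [ee, Pi.single_apply]

theorem norm_smul_ee {h : ℝ} (hh : 0 ≤ h) (i : Fin d) : ‖h • ee d i‖ = h := by
  rw [norm_smul, ee, Pi.norm_single, norm_one, mul_one, Real.norm_of_nonneg hh]

theorem dotProduct_mulVec_of_apply_ee (B : (Fin d → ℝ) →L[ℝ] (Fin d → ℝ) →L[ℝ] ℝ)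
    (v : Fin d → ℝ) : v ⬝ᵥ (Matrix.of fun i j => B (ee d i) (ee d j)) *ᵥ v = B v v := by
  conv_rhs => rw [← sum_smul_ee v]
  simp [dotProduct, Matrix.mulVec, Finset.mul_sum]
  rw [Finset.sum_comm]
  exact Finset.sum_congr rfl fun _ _ => Finset.sum_congr rfl fun _ _ => by ring

theorem pd2_eq_fderivWithin {u : (Fin d → ℝ) → ℝ} (hu : ContDiffOn ℝ 2 u (Q d))
    {x : Fin d → ℝ} (hx : x ∈ Q d) (i j : Fin d) :
    pd2 d u i j x = fderivWithin ℝ (fderivWithin ℝ u (Q d)) (Q d) x (ee d i) (ee d j) := by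
  have hud := uniqueDiffOn_convex (convex_Icc 0 1) (interior_Q_nonempty (d := d))
  have hd := ((hu.fderivWithin hud (by norm_num : (1 : WithTop ℕ∞) + 1 ≤ 2)).differentiableOn
    one_ne_zero x hx).hasFDerivWithinAt
  have := (hd.clm_apply (hasFDerivWithinAt_const (ee d j) x (Q d))).fderivWithin (hud x hx)
  simp only [pd2, pd, this]
  simp

def D2stencilIn (s : Set (Fin d → ℝ)) (h : ℝ) (x : Fin d → ℝ) (i j : Fin d) : Prop :=
  if i = j then x + h • ee d i ∈ s ∧ x - h • ee d i ∈ s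
  else
    x + h • ee d i + h • ee d j ∈ s ∧ x - h • ee d i + h • ee d j ∈ s ∧
      x + h • ee d i - h • ee d j ∈ s ∧ x - h • ee d i - h • ee d j ∈ s

section FiniteDifferences

variable {s : Set (Fin d → ℝ)} {u : (Fin d → ℝ) → ℝ} {x : Fin d → ℝ} {M h : ℝ}

theorem D2defined.stencilIn_Q {i j : Fin d} (H : D2defined d h x i j) :
    D2stencilIn (Q d) h x i j := by
  unfold D2defined at H
  unfold D2stencilIn
  split_ifs at H ⊢
  exacts [⟨H.1.1, H.2.1⟩, ⟨H.1.1, H.2.1.1, H.2.2.1.1, H.2.2.2.1⟩]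

theorem abs_D1_sub_le {f' : (Fin d → ℝ) →L[ℝ] ℝ}
    (hT : ∀ y ∈ s, |u y - u x - f' (y - x)| ≤ M * ‖y - x‖ ^ 2) (hh : 0 < h) {i : Fin d}
    (hi : x + h • ee d i ∈ s) : |D1 d h u x i - f' (ee d i)| ≤ M * h := by
  have := hT _ hi
  rw [add_sub_cancel_left, map_smul, smul_eq_mul, norm_smul_ee hh.le] at this
  exact abs_div_sub_le_of_abs_sub_mul_le hh (by linarith)

theorem abs_D2_sub_le {f' : (Fin d → ℝ) →L[ℝ] ℝ} {f'' : (Fin d → ℝ) →L[ℝ] (Fin d → ℝ) →L[ℝ] ℝ}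
    (hT : ∀ y ∈ s, |u y - u x - f' (y - x) - 1 / 2 * f'' (y - x) (y - x)| ≤ M * ‖y - x‖ ^ 3)
    (hM : 0 ≤ M) (hsymm : ∀ v w, f'' v w = f'' w v) (hh : 0 < h) {i j : Fin d}
    (hst : D2stencilIn s h x i j) : |D2 d h u x i j - f'' (ee d i) (ee d j)| ≤ 8 * M * h := by
  have hscale : ∀ k l, f'' (h • ee d k) (h • ee d l) = h ^ 2 * f'' (ee d k) (ee d l) := by
    simp [sq, mul_assoc]
  unfold D2stencilIn at hst
  rw [D2]
  split_ifs at hst ⊢ with hij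
  · subst hij
    have := abs_second_diff_sub_le hT hst.1 hst.2
    rw [hscale, norm_smul_ee hh.le] at this
    refine abs_div_sub_le_of_abs_sub_mul_le (by positivity) (this.trans ?_)
    nlinarith [mul_nonneg hM (pow_pos hh 3).le]
  · obtain ⟨h₁, h₂, h₃, h₄⟩ := hst
    have := abs_mixed_diff_sub_le hT hM (hsymm _ _) h₁ h₂ h₃ h₄
    rw [hscale, norm_smul_ee hh.le, norm_smul_ee hh.le] at this
    refine abs_div_sub_le_of_abs_sub_mul_le (by positivity) ?_
    rw [mul_assoc]
    exact this.trans_eq (by ring)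

end FiniteDifferences

theorem D1_add_mul (h c : ℝ) (u v : (Fin d → ℝ) → ℝ) (x : Fin d → ℝ) (i : Fin d) :
    D1 d h (fun y => u y + c * v y) x i = D1 d h u x i + c * D1 d h v x i := by
  simp only [D1]
  ring

theorem D2_add_mul (h c : ℝ) (u v : (Fin d → ℝ) → ℝ) (x : Fin d → ℝ) (i j : Fin d) :
    D2 d h (fun y => u y + c * v y) x i j = D2 d h u x i j + c * D2 d h v x i j := by
  simp only [D2]
  split_ifs <;> ring

theorem D1_dotProduct_self {h : ℝ} (hh : h ≠ 0) (x : Fin d → ℝ) (i : Fin d) :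
    D1 d h (fun y => y ⬝ᵥ y) x i = 2 * x i + h := by
  simp only [D1, ee, add_dotProduct, dotProduct_add, smul_dotProduct, dotProduct_smul,
    dotProduct_single, single_dotProduct, dotProduct_comm x]
  field_simp
  simp
  ring

theorem D2_dotProduct_self {h : ℝ} (hh : h ≠ 0) (x : Fin d → ℝ) (i j : Fin d) :
    D2 d h (fun y => y ⬝ᵥ y) x i j = if i = j then 2 else 0 := by
  simp only [D2, ee, add_dotProduct, dotProduct_add, sub_dotProduct, dotProduct_sub,
    smul_dotProduct, dotProduct_smul, dotProduct_single, single_dotProduct, dotProduct_comm x]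
  split_ifs with hij
  · field_simp
    simp
    ring
  · simp [hij, Ne.symm hij]
    left
    ring

theorem D2_comm (h : ℝ) (u : (Fin d → ℝ) → ℝ) (x : Fin d → ℝ) (i j : Fin d) :
    D2 d h u x j i = D2 d h u x i j := by
  rcases eq_or_ne i j with rfl | hij
  · rfl
  · rw [D2, D2, if_neg hij.symm, if_neg hij]
    have e₂ : x - h • ee d j + h • ee d i = x + h • ee d i - h • ee d j := by abel
    have e₃ : x + h • ee d j - h • ee d i = x - h • ee d i + h • ee d j := by abel
    rw [add_right_comm x, sub_right_comm x, e₂, e₃]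
    ring

theorem isHermitian_Hd (h : ℝ) (u : (Fin d → ℝ) → ℝ) (x : Fin d → ℝ) :
    (Hd d h u x).IsHermitian :=
  Matrix.IsHermitian.ext fun i j => by simp [Hd, D2_comm]

theorem inMesh.coord_bounds {n : ℕ} {x : Fin d → ℝ} (hx : inMesh d (1 / n) x) (k : Fin d) :
    1 / n ≤ x k ∧ x k ≤ 1 - 1 / n := by
  obtain ⟨z, hz⟩ := hx.1.2 k
  obtain ⟨h0, h1⟩ := hx.2 k
  rw [hz, one_div_mul_eq_div] at h0 h1 ⊢
  have hn : (0 : ℝ) < n := by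
    rcases Nat.eq_zero_or_pos n with rfl | hn
    · simp at h0
    · exact_mod_cast hn
  rw [div_pos_iff_of_pos_right hn] at h0
  rw [div_lt_one hn] at h1
  have hz1 : (1 : ℝ) ≤ z := by exact_mod_cast (show (0 : ℤ) < z by exact_mod_cast h0)
  have hzn : (z : ℝ) + 1 ≤ n := by exact_mod_cast (show z < (n : ℤ) by exact_mod_cast h1)
  constructor
  · exact div_le_div_of_nonneg_right hz1 hn.le
  · rw [le_sub_iff_add_le, ← add_div, div_le_one hn]
    exact hzn

theorem inMesh.D2stencilIn_Q {n : ℕ} {x : Fin d → ℝ} (hx : inMesh d (1 / n) x) (i j : Fin d) :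
    D2stencilIn (Q d) (1 / n) x i j := by
  have hb := hx.coord_bounds
  have h0 : (0 : ℝ) ≤ 1 / n := by positivity
  unfold D2stencilIn
  split_ifs with hij
  on_goal 1 => refine ⟨?_, ?_⟩
  on_goal 3 => refine ⟨?_, ?_, ?_, ?_⟩
  all_goals
    refine mem_Q_iff.2 fun k => ?_
    have := hb k
    simp only [Pi.add_apply, Pi.sub_apply, Pi.smul_apply, ee, Pi.single_apply, smul_eq_mul]
    split_ifs <;> grind

variable (d) in
noncomputable def meshError (h : ℝ) (v u : (Fin d → ℝ) → ℝ) (x : Fin d → ℝ) : ℝ :=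
  |v x - u x| +
    (∑ i : Fin d,
      if onMesh d h (x + h • ee d i) then |D1 d h v x i - pd d u i x| else 0) +
    (∑ i : Fin d, ∑ j : Fin d,
      if i ≤ j ∧ D2defined d h x i j then |D2 d h v x i j - pd2 d u i j x| else 0)

theorem dotProduct_self_mem_Icc {x : Fin d → ℝ} (hx : x ∈ Q d) : x ⬝ᵥ x ∈ Icc 0 (d : ℝ) := by
  refine ⟨by simpa using dotProduct_star_self_nonneg x, ?_⟩
  have := Finset.sum_le_card_nsmul Finset.univ (fun k => x k * x k) 1 fun k _ => by
    obtain ⟨h0, h1⟩ := mem_Q_iff.1 hx k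
    nlinarith
  simpa [dotProduct] using this

section Perturbation

variable {u : (Fin d → ℝ) → ℝ} {M h δ : ℝ} {x : Fin d → ℝ}

theorem abs_D1_perturb_sub_le (hT : HasTaylorBounds (Q d) u M) (hh : 0 < h) (hh1 : h ≤ 1)
    (hδ : 0 ≤ δ) (hx : x ∈ Q d) {i : Fin d} (hi : x + h • ee d i ∈ Q d) :
    |D1 d h (fun y => u y + δ * (y ⬝ᵥ y)) x i - pd d u i x| ≤ M * h + 3 * δ := by
  have hD := abs_le.1 (abs_D1_sub_le (fun y hy => (hT x hx y hy).1) hh hi)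
  have hxi := mem_Q_iff.1 hx i
  rw [D1_add_mul, D1_dotProduct_self hh.ne', pd, abs_le]
  constructor <;> nlinarith

theorem abs_D2_perturb_sub_le (hu : ContDiffOn ℝ 2 u (Q d)) (hT : HasTaylorBounds (Q d) u M)
    (hM : 0 ≤ M) (hh : 0 < h) (hδ : 0 ≤ δ) (hx : x ∈ Q d) {i j : Fin d}
    (hst : D2stencilIn (Q d) h x i j) :
    |D2 d h (fun y => u y + δ * (y ⬝ᵥ y)) x i j - pd2 d u i j x| ≤ 8 * M * h + 2 * δ := by
  have hD := abs_le.1 (abs_D2_sub_le (fun y hy => (hT x hx y hy).2) hM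
    (hu.isSymmSndFDerivWithinAt_of_convex (convex_Icc 0 1) interior_Q_nonempty hx) hh hst)
  rw [pd2_eq_fderivWithin hu hx, D2_add_mul, D2_dotProduct_self hh.ne', abs_le]
  split_ifs <;> constructor <;> linarith

theorem meshError_perturb_le (hu : ContDiffOn ℝ 2 u (Q d)) (hT : HasTaylorBounds (Q d) u M)
    (hM : 0 ≤ M) (hh : 0 < h) (hh1 : h ≤ 1) (hδ : 0 ≤ δ) (hx : x ∈ Q d) :
    meshError d h (fun y => u y + δ * (y ⬝ᵥ y)) u x
      ≤ d * δ + d * (M * h + 3 * δ) + d ^ 2 * (8 * M * h + 2 * δ) := by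
  have hval : |u x + δ * (x ⬝ᵥ x) - u x| ≤ d * δ := by
    obtain ⟨h0, h1⟩ := dotProduct_self_mem_Icc hx
    rw [add_sub_cancel_left, abs_of_nonneg (by positivity)]
    nlinarith
  have hD1 : ∀ i, (if onMesh d h (x + h • ee d i) then
      |D1 d h (fun y => u y + δ * (y ⬝ᵥ y)) x i - pd d u i x| else 0) ≤ M * h + 3 * δ := by
    intro i
    split_ifs with hi
    exacts [abs_D1_perturb_sub_le hT hh hh1 hδ hx hi.1, by positivity]
  have hD2 : ∀ i j, (if i ≤ j ∧ D2defined d h x i j then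
      |D2 d h (fun y => u y + δ * (y ⬝ᵥ y)) x i j - pd2 d u i j x| else 0)
        ≤ 8 * M * h + 2 * δ := by
    intro i j
    split_ifs with hij
    exacts [abs_D2_perturb_sub_le hu hT hM hh hδ hx hij.2.stencilIn_Q, by positivity]
  refine add_le_add (add_le_add hval ?_) ?_
  · simpa [mul_add] using Finset.sum_le_card_nsmul Finset.univ _ _ fun i _ => hD1 i
  · have := Finset.sum_le_card_nsmul Finset.univ _ _ fun i _ =>
      Finset.sum_le_card_nsmul Finset.univ _ _ fun j _ => hD2 i j
    simp only [Finset.card_univ, Fintype.card_fin, nsmul_eq_mul] at this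
    linarith

/-- The second difference of `δ |y|²` is `2 δ I`; at interior mesh points this margin absorbs
the `O(h)` error between `H_h u` and the Hessian of `u`, which is positive semidefinite. -/
theorem posSemidef_Hd_perturb (hu : ContDiffOn ℝ 2 u (Q d)) (hconv : ConvexOn ℝ (Q d) u)
    (hT : HasTaylorBounds (Q d) u M) (hM : 0 ≤ M) {n : ℕ} (hn : 0 < n)
    (hMδ : d * (8 * M * (1 / n)) ≤ 2 * δ) (hx : inMesh d (1 / n) x) :
    (Hd d (1 / n) (fun y => u y + δ * (y ⬝ᵥ y)) x).PosSemidef := by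
  have hxQ : x ∈ Q d := hx.1.1
  have hh : (0 : ℝ) < 1 / n := by positivity
  set g₂ := fderivWithin ℝ (fderivWithin ℝ u (Q d)) (Q d) x
  refine Matrix.posSemidef_of_abs_sub_le (G := Matrix.of fun i j => g₂ (ee d i) (ee d j))
    (r := 2 * δ) (c := 8 * M * (1 / n)) (isHermitian_Hd _ _ _) (fun v => ?_) (fun i j => ?_)
    (by simpa using hMδ)
  · rw [dotProduct_mulVec_of_apply_ee]
    exact hconv.apply_self_nonneg_of_taylor (mem_interior_Q hx.2) (fun y hy => (hT x hxQ y hy).2) v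
  · have : (Hd d (1 / n) (fun y => u y + δ * (y ⬝ᵥ y)) x - Matrix.of
        (fun i j => g₂ (ee d i) (ee d j)) - (2 * δ) • 1) i j
          = D2 d (1 / n) u x i j - g₂ (ee d i) (ee d j) := by
      simp only [Matrix.sub_apply, Matrix.smul_apply, Hd, Matrix.of_apply, D2_add_mul,
        D2_dotProduct_self hh.ne', Matrix.one_apply, smul_eq_mul]
      split_ifs <;> ring
    rw [this]
    exact abs_D2_sub_le (fun y hy => (hT x hxQ y hy).2) hM
      (hu.isSymmSndFDerivWithinAt_of_convex (convex_Icc 0 1) interior_Q_nonempty hxQ) hh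
      (hx.D2stencilIn_Q i j)

end Perturbation

end Stmt12

open Stmt12

theorem stmt_12_general (d : ℕ)
    (u : (Fin d → ℝ) → ℝ)
    (hu_smooth : ContDiffOn ℝ 3 u (Q d))
    (hu_conv : ConvexOn ℝ (Q d) u)
    (ε : ℝ) (hε : 0 < ε) :
    ∃ h₀ : ℝ, 0 < h₀ ∧
      ∀ n : ℕ, 0 < n → (1 / n : ℝ) < h₀ →
        ∃ uh : (Fin d → ℝ) → ℝ,
          (∀ x, onMesh d (1 / n) x →
            |uh x - u x| +
              (∑ i : Fin d,
                if onMesh d (1 / n) (x + (1 / n : ℝ) • ee d i) then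
                  |D1 d (1 / n) uh x i - pd d u i x| else 0) +
              (∑ i : Fin d, ∑ j : Fin d,
                if i ≤ j ∧ D2defined d (1 / n) x i j then
                  |D2 d (1 / n) uh x i j - pd2 d u i j x| else 0) < ε) ∧
          (∀ x, inMesh d (1 / n) x → (Hd d (1 / n) uh x).PosSemidef) := by
  obtain ⟨M, hM, hT⟩ :=
    hu_smooth.exists_hasTaylorBounds (convex_Icc 0 1) isCompact_Icc interior_Q_nonempty
  have hu : ContDiffOn ℝ 2 u (Q d) := hu_smooth.of_le (by norm_num)
  set δ := ε / (8 * (d + 1) ^ 2) with hδ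
  have hδ0 : 0 < δ := by positivity
  refine ⟨δ / (8 * M * (d + 1)), by positivity, fun n hn hsmall =>
    ⟨fun y => u y + δ * (y ⬝ᵥ y), fun x hx => ?_, fun x hx => ?_⟩⟩
  all_goals
    have hh : (0 : ℝ) < 1 / n := by positivity
    have hMh : 8 * M * (1 / n) * (d + 1) < δ := by
      rw [lt_div_iff₀ (by positivity)] at hsmall
      linarith
    have hd : (0 : ℝ) ≤ d := d.cast_nonneg
  · have hε' : ε = 8 * (d + 1) ^ 2 * δ := by rw [hδ]; field_simp
    have hh1 : (1 / n : ℝ) ≤ 1 := (div_le_one (by positivity)).2 (by exact_mod_cast hn)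
    refine (meshError_perturb_le hu hT hM.le hh hh1 hδ0.le hx.1).trans_lt ?_
    rw [hε']
    nlinarith [mul_nonneg hd (mul_nonneg hM.le hh.le)]
  · exact posSemidef_Hd_perturb hu hu_conv hT hM.le hn (by nlinarith) hx

/-- For every convex `u ∈ C³(Q)` and every `ε > 0` there is `h₀ > 0` such
that for every mesh size `h = 1/n < h₀` there is a discrete function `u_h` on `M_h`
whose values, first and second finite differences are within `ε` of `u` and its
derivatives (at every mesh point, counting only the finite differences defined there),
and whose discrete Hessian is positive semidefinite at every interior mesh point. -/
theorem stmt_12 (d : ℕ) (hd : 0 < d)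
    (u : (Fin d → ℝ) → ℝ)
    (hu_smooth : ContDiffOn ℝ 3 u (Q d))
    (hu_conv : ConvexOn ℝ (Q d) u)
    (ε : ℝ) (hε : 0 < ε) :
    ∃ h₀ : ℝ, 0 < h₀ ∧
      ∀ n : ℕ, 0 < n → (1 / n : ℝ) < h₀ →
        ∃ uh : (Fin d → ℝ) → ℝ,
          (∀ x, onMesh d (1 / n) x →
            |uh x - u x| +
              (∑ i : Fin d,
                if onMesh d (1 / n) (x + (1 / n : ℝ) • ee d i) then
                  |D1 d (1 / n) uh x i - pd d u i x| else 0) +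
              (∑ i : Fin d, ∑ j : Fin d,
                if i ≤ j ∧ D2defined d (1 / n) x i j then
                  |D2 d (1 / n) uh x i j - pd2 d u i j x| else 0) < ε) ∧
          (∀ x, inMesh d (1 / n) x → (Hd d (1 / n) uh x).PosSemidef) :=
  stmt_12_general d u hu_smooth hu_conv ε hε
end

section
/- Let K > 0 and let S = (u_{h_n}) be a sequence of discrete functions on nested meshes with h_n ↓ 0 such that u_{h_n} ∈ Λ¹_{h_n,K} for all n. Then there exists a function u ∈ Λ¹_K and a subsequence S' = (u_{h'}) of S such that ‖u_{h'} − u‖₀* → 0, i.e. max_{x∈M_{h'}} |u_{h'}(x) − u(x)| → 0. -/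
open Set Filter
open scoped Classical

namespace Stmt14

variable (d : ℕ)

/-- The cube `Q = [0,1]^d`. -/
def Q : Set (Fin d → ℝ) := Icc 0 1

/-- The canonical basis vector `e i`. -/
def ee (i : Fin d) : Fin d → ℝ := Pi.single i 1

/-- `x` belongs to the mesh `M_h`, i.e. `x ∈ Q` and `x = h • z` for some `z ∈ ℤ^d`. -/
def onMesh (h : ℝ) (x : Fin d → ℝ) : Prop :=
  x ∈ Icc (0 : Fin d → ℝ) 1 ∧ ∀ i, ∃ z : ℤ, x i = h * z

/-- `x` is an interior mesh point: `x ∈ M_h ∩ (0,1)^d`. -/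
def inMesh (h : ℝ) (x : Fin d → ℝ) : Prop :=
  onMesh d h x ∧ ∀ i, 0 < x i ∧ x i < 1

/-- First order forward finite difference `D_{h,i} u (x)`. -/
noncomputable def D1 (h : ℝ) (u : (Fin d → ℝ) → ℝ) (x : Fin d → ℝ) (i : Fin d) : ℝ :=
  (u (x + h • ee d i) - u x) / h

/-- Second order finite differences `D²_{h,ij} u (x)`. -/
noncomputable def D2 (h : ℝ) (u : (Fin d → ℝ) → ℝ) (x : Fin d → ℝ) (i j : Fin d) : ℝ :=
  if i = j then (u (x + h • ee d i) - 2 * u x + u (x - h • ee d i)) / h ^ 2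
  else
    (u (x + h • ee d i + h • ee d j) - u (x - h • ee d i + h • ee d j) -
        u (x + h • ee d i - h • ee d j) + u (x - h • ee d i - h • ee d j)) /
      (4 * h ^ 2)

/-- The discrete Hessian `H_h u (x)`. -/
noncomputable def Hd (h : ℝ) (u : (Fin d → ℝ) → ℝ) (x : Fin d → ℝ) :
    Matrix (Fin d) (Fin d) ℝ :=
  Matrix.of fun i j => D2 d h u x i j

/-- First partial derivative `∂_i u` (derivative taken within `Q`). -/
noncomputable def pd (u : (Fin d → ℝ) → ℝ) (i : Fin d) (y : Fin d → ℝ) : ℝ :=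
  fderivWithin ℝ u (Q d) y (ee d i)

end Stmt14


/-!
The discrete difference bounds make each `u_ n` Lipschitz on its mesh (with constant `K * d` for
the sup metric, moving one coordinate at a time), so McShane extension followed by truncation at
`±K` gives uniformly bounded, equi-Lipschitz functions on `Q`, and Arzelà–Ascoli yields a uniformly
convergent subsequence. The limit keeps the directional bound with the sharp constant `K`: the
points `x` and `x + t • e i` lie within one mesh width of two mesh points that differ only in the
`i`-th coordinate, where the discrete bound applies, and the `O(h)` error vanishes in the limit.
-/

open scoped NNReal

lemma LipschitzOnWith.exists_lipschitzWith_eqOn_abs_le {α : Type*} [PseudoMetricSpace α]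
    {f : α → ℝ} {s : Set α} {L : ℝ≥0} (hf : LipschitzOnWith L f s) {K : ℝ} (hK : 0 ≤ K)
    (hfK : ∀ x ∈ s, |f x| ≤ K) :
    ∃ g : α → ℝ, LipschitzWith L g ∧ EqOn f g s ∧ ∀ x, |g x| ≤ K := by
  obtain ⟨g, hg, hfg⟩ := hf.extend_real
  refine ⟨fun x => max (-K) (min K (g x)), (hg.const_min K).const_max (-K), fun x hx => ?_,
    fun x => abs_le.2 ⟨le_max_left _ _, max_le (by linarith) (min_le_left _ _)⟩⟩
  obtain ⟨hlo, hhi⟩ := abs_le.1 (hfK x hx)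
  simp only [← hfg hx, min_eq_right hhi, max_eq_right hlo]

theorem exists_strictMono_tendstoUniformlyOn_of_lipschitzOnWith {α : Type*}
    [PseudoMetricSpace α] {s : Set α} (hs : IsCompact s) {L : ℝ≥0} {K : ℝ} {f : ℕ → α → ℝ}
    (hf : ∀ n, LipschitzOnWith L (f n) s) (hfK : ∀ n, ∀ x ∈ s, |f n x| ≤ K) :
    ∃ g : α → ℝ, ∃ φ : ℕ → ℕ, StrictMono φ ∧ TendstoUniformlyOn (fun j => f (φ j)) g atTop s := by
  have : CompactSpace s := isCompact_iff_compactSpace.1 hs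
  let F : ℕ → BoundedContinuousFunction s ℝ := fun n =>
    .mkOfCompact ⟨fun x => f n x, (hf n).to_restrict.continuous⟩
  have hequi : Equicontinuous ((↑) : range F → s → ℝ) :=
    (LipschitzWith.uniformEquicontinuous _ L <| by
      rintro ⟨_, n, rfl⟩; exact (hf n).to_restrict).equicontinuous
  have hcomp := BoundedContinuousFunction.arzela_ascoli (Icc (-K) K) isCompact_Icc (range F)
    (by rintro _ x ⟨n, rfl⟩; exact abs_le.1 (hfK n x x.2)) hequi
  obtain ⟨G, -, φ, hφ, hG⟩ := hcomp.tendsto_subseq fun n => subset_closure (mem_range_self n)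
  refine ⟨fun x => if hx : x ∈ s then G ⟨x, hx⟩ else 0, φ, hφ, ?_⟩
  rw [tendstoUniformlyOn_iff_tendstoUniformly_comp_coe]
  have hG' : (fun x => if hx : x ∈ s then G ⟨x, hx⟩ else 0) ∘ ((↑) : s → α) = G := by
    ext x; simp [x.2]
  rw [hG']
  exact BoundedContinuousFunction.tendsto_iff_tendstoUniformly.1 hG

lemma sub_mul_floor_div_mem_Ico {h : ℝ} (hh : 0 < h) (a : ℝ) : a - h * ⌊a / h⌋ ∈ Ico 0 h := by
  have : a - h * ⌊a / h⌋ = h * Int.fract (a / h) := by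
    rw [Int.fract, mul_sub, mul_div_cancel₀ _ hh.ne']
  rw [this]
  exact ⟨by positivity, mul_lt_of_lt_one_right hh (Int.fract_lt_one _)⟩

namespace Stmt14

variable {d : ℕ}

lemma add_smul_ee (x : Fin d → ℝ) (i : Fin d) (t : ℝ) :
    x + t • ee d i = Function.update x i (x i + t) := by
  ext j
  rcases eq_or_ne j i with rfl | hj <;> simp [ee, *]

lemma onMesh_iff {h : ℝ} {x : Fin d → ℝ} :
    onMesh d h x ↔ ∀ j, x j ∈ Icc 0 1 ∧ ∃ z : ℤ, x j = h * z :=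
  ⟨fun hx j => ⟨⟨hx.1.1 j, hx.1.2 j⟩, hx.2 j⟩,
    fun hx => ⟨⟨fun j => (hx j).1.1, fun j => (hx j).1.2⟩, fun j => (hx j).2⟩⟩

lemma onMesh_update {h : ℝ} {x : Fin d → ℝ} (hx : onMesh d h x) (i : Fin d) {c : ℝ}
    (hc : c ∈ Icc 0 1) (z : ℤ) (hcz : c = h * z) : onMesh d h (Function.update x i c) := by
  refine onMesh_iff.2 fun j => ?_
  rcases eq_or_ne j i with rfl | hj
  · simpa using ⟨hc, z, hcz⟩
  · simpa [hj] using onMesh_iff.1 hx j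

lemma onMesh_piecewise {h : ℝ} {x y : Fin d → ℝ} (hx : onMesh d h x) (hy : onMesh d h y)
    (s : Finset (Fin d)) : onMesh d h (s.piecewise y x) := by
  refine onMesh_iff.2 fun j => ?_
  by_cases hj : j ∈ s
  · simpa [hj] using onMesh_iff.1 hy j
  · simpa [hj] using onMesh_iff.1 hx j

def ForwardDiffBounded (h K : ℝ) (u : (Fin d → ℝ) → ℝ) : Prop :=
  ∀ x i, onMesh d h x → onMesh d h (x + h • ee d i) → |D1 d h u x i| ≤ K

section DiscreteLipschitz

variable {h K : ℝ} {u : (Fin d → ℝ) → ℝ}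

lemma abs_update_add_sub_le (hh : 0 < h)
    (hu : ForwardDiffBounded h K u)
    {p : Fin d → ℝ} (hp : onMesh d h p) {i : Fin d} {m : ℕ}
    (hq : onMesh d h (Function.update p i (p i + m * h))) :
    |u (Function.update p i (p i + m * h)) - u p| ≤ K * (m * h) := by
  set r : ℕ → Fin d → ℝ := fun k => Function.update p i (p i + k * h)
  obtain ⟨zp, hzp⟩ := (onMesh_iff.1 hp i).2
  have hr : ∀ k ≤ m, onMesh d h (r k) := by
    intro k hk
    have hpi := (onMesh_iff.1 hp i).1
    have hqi := (onMesh_iff.1 hq i).1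
    simp only [Function.update_self] at hqi
    have : (k : ℝ) * h ≤ m * h := by gcongr
    refine onMesh_update hp i ⟨add_nonneg hpi.1 (by positivity), by linarith [hqi.2]⟩ (zp + k) ?_
    rw [hzp]; push_cast; ring
  have hstep : ∀ k < m, dist (u (r k)) (u (r (k + 1))) ≤ K * h := by
    intro k hk
    have hrk : r (k + 1) = r k + h • ee d i := by
      simp only [r, add_smul_ee, Function.update_self, Function.update_idem]
      push_cast; ring_nf
    have := hu (r k) i (hr k hk.le) (hrk ▸ hr (k + 1) hk)
    rwa [D1, ← hrk, abs_div, abs_of_pos hh, div_le_iff₀ hh, ← Real.dist_eq, dist_comm] at this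
  have hr0 : r 0 = p := by simp [r]
  calc |u (r m) - u p| = dist (u (r 0)) (u (r m)) := by rw [hr0, Real.dist_eq, abs_sub_comm]
    _ ≤ ∑ k ∈ Finset.range m, dist (u (r k)) (u (r (k + 1))) :=
        dist_le_range_sum_dist (fun k => u (r k)) m
    _ ≤ ∑ _k ∈ Finset.range m, K * h :=
        Finset.sum_le_sum fun k hk => hstep k (Finset.mem_range.1 hk)
    _ = K * (m * h) := by rw [Finset.sum_const, Finset.card_range, nsmul_eq_mul]; ring

lemma abs_update_sub_le (hh : 0 < h)
    (hu : ForwardDiffBounded h K u)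
    {p : Fin d → ℝ} (hp : onMesh d h p) {i : Fin d} {c : ℝ}
    (hq : onMesh d h (Function.update p i c)) :
    |u (Function.update p i c) - u p| ≤ K * |c - p i| := by
  obtain ⟨zp, hzp⟩ := (onMesh_iff.1 hp i).2
  obtain ⟨zc, hzc⟩ := (onMesh_iff.1 hq i).2
  rw [Function.update_self] at hzc
  have hc : c = p i + (zc - zp : ℤ) * h := by rw [hzc, hzp]; push_cast; ring
  rcases (zc - zp).eq_nat_or_neg with ⟨m, hm | hm⟩ <;> rw [hm] at hc <;> push_cast at hc
  · subst hc
    rw [add_sub_cancel_left, abs_of_nonneg (by positivity : (0 : ℝ) ≤ m * h)]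
    exact abs_update_add_sub_le hh hu hp hq
  · have hp' : p = Function.update (Function.update p i c) i (c + m * h) := by
      rw [Function.update_idem, hc, neg_mul, neg_add_cancel_right, Function.update_eq_self]
    have := abs_update_add_sub_le hh hu hq (i := i) (m := m)
    simp only [Function.update_self] at this
    rw [← hp', abs_sub_comm] at this
    rw [show c - p i = -(m * h) by linarith, abs_neg,
      abs_of_nonneg (by positivity : (0 : ℝ) ≤ m * h)]
    exact this hp

lemma abs_sub_le_sum_abs_sub (hh : 0 < h)
    (hu : ForwardDiffBounded h K u)
    {x y : Fin d → ℝ} (hx : onMesh d h x) (hy : onMesh d h y) :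
    |u y - u x| ≤ K * ∑ j, |y j - x j| := by
  classical
  suffices key : ∀ s : Finset (Fin d), |u (s.piecewise y x) - u x| ≤ K * ∑ j ∈ s, |y j - x j| by
    simpa using key Finset.univ
  intro s
  induction s using Finset.induction with
  | empty => simp
  | insert i s hi ih =>
    have hstep : |u ((insert i s).piecewise y x) - u (s.piecewise y x)| ≤ K * |y i - x i| := by
      have := abs_update_sub_le hh hu (onMesh_piecewise hx hy s) (i := i) (c := y i)
      rw [← Finset.piecewise_insert, Finset.piecewise_eq_of_notMem _ _ _ hi] at this
      exact this (onMesh_piecewise hx hy _)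
    calc |u ((insert i s).piecewise y x) - u x|
        ≤ |u ((insert i s).piecewise y x) - u (s.piecewise y x)| + |u (s.piecewise y x) - u x| :=
          abs_sub_le _ _ _
      _ ≤ K * |y i - x i| + K * ∑ j ∈ s, |y j - x j| := add_le_add hstep ih
      _ = K * ∑ j ∈ insert i s, |y j - x j| := by rw [Finset.sum_insert hi, mul_add]

lemma lipschitzOnWith_onMesh (hh : 0 < h) (hK : 0 ≤ K)
    (hu : ForwardDiffBounded h K u) :
    LipschitzOnWith (K * d).toNNReal u {x | onMesh d h x} := by
  refine LipschitzOnWith.of_dist_le_mul fun y hy x hx => ?_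
  rw [Real.coe_toNNReal _ (by positivity), Real.dist_eq, mul_assoc]
  refine (abs_sub_le_sum_abs_sub hh hu hx hy).trans (mul_le_mul_of_nonneg_left ?_ hK)
  calc ∑ j, |y j - x j| ≤ ∑ _j : Fin d, dist y x :=
        Finset.sum_le_sum fun j _ => by rw [← Real.dist_eq]; exact dist_le_pi_dist y x j
    _ = d * dist y x := by simp

end DiscreteLipschitz

noncomputable def meshFloor (h : ℝ) (x : Fin d → ℝ) : Fin d → ℝ := fun j => h * ⌊x j / h⌋

lemma onMesh_meshFloor {h : ℝ} (hh : 0 < h) {x : Fin d → ℝ} (hx : x ∈ Q d) :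
    onMesh d h (meshFloor h x) := by
  refine onMesh_iff.2 fun j => ⟨⟨?_, ?_⟩, ⌊x j / h⌋, rfl⟩
  · have := Int.floor_nonneg.2 (div_nonneg (hx.1 j) hh.le)
    exact mul_nonneg hh.le (by exact_mod_cast this)
  · have : x j ≤ 1 := hx.2 j
    linarith [(sub_mul_floor_div_mem_Ico hh (x j)).1, show meshFloor h x j = h * ⌊x j / h⌋ from rfl]

lemma abs_sub_meshFloor_le {h : ℝ} (hh : 0 < h) (x : Fin d → ℝ) (j : Fin d) :
    |x j - meshFloor h x j| ≤ h := by
  unfold meshFloor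
  obtain ⟨h0, h1⟩ := sub_mul_floor_div_mem_Ico hh (x j)
  exact abs_le.2 ⟨by linarith, h1.le⟩

lemma dist_meshFloor_le {h : ℝ} (hh : 0 < h) (x : Fin d → ℝ) : dist x (meshFloor h x) ≤ h :=
  (dist_pi_le_iff hh.le).2 fun j => by rw [Real.dist_eq]; exact abs_sub_meshFloor_le hh x j

lemma abs_sub_add_smul_ee_le {h K : ℝ} {L : ℝ≥0} {u w : (Fin d → ℝ) → ℝ} (hh : 0 < h)
    (hK : 0 ≤ K)
    (hu : ForwardDiffBounded h K u)
    (hw : LipschitzWith L w) (hwu : EqOn u w {x | onMesh d h x}) {x : Fin d → ℝ} (hx : x ∈ Q d)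
    {i : Fin d} {t : ℝ} (hxt : x + t • ee d i ∈ Q d) :
    |w x - w (x + t • ee d i)| ≤ K * |t| + 2 * (L + K) * h := by
  set y := x + t • ee d i
  set p := meshFloor h x
  set q := meshFloor h y
  have hp := onMesh_meshFloor hh hx
  have hq := onMesh_meshFloor hh hxt
  have hyi : y i = x i + t := by simp [y, add_smul_ee]
  have hqp : q = Function.update p i (q i) := by
    ext j
    rcases eq_or_ne j i with rfl | hj
    · simp
    · simp [q, p, meshFloor, y, add_smul_ee, hj]
  have hpq : |w q - w p| ≤ K * (|t| + 2 * h) := by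
    rw [← hwu hp, ← hwu hq]
    calc |u q - u p| ≤ K * |q i - p i| := by
          conv_lhs => rw [hqp]
          exact abs_update_sub_le hh hu hp (hqp ▸ hq)
      _ ≤ K * (|t| + 2 * h) := by
          gcongr
          have hpx := abs_le.1 (abs_sub_meshFloor_le hh x i)
          have hqy := abs_le.1 (abs_sub_meshFloor_le hh y i)
          rw [hyi] at hqy
          exact abs_le.2 ⟨by linarith [neg_abs_le t], by linarith [le_abs_self t]⟩
  have hxp : |w x - w p| ≤ L * h := by
    rw [← Real.dist_eq]; exact (hw.dist_le_mul x p).trans (by gcongr; exact dist_meshFloor_le hh x)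
  have hyq : |w q - w y| ≤ L * h := by
    rw [← Real.dist_eq, dist_comm]
    exact (hw.dist_le_mul y q).trans (by gcongr; exact dist_meshFloor_le hh y)
  calc |w x - w y| ≤ |w x - w p| + |w q - w p| + |w q - w y| := by
        have := abs_sub_le (w x) (w p) (w y)
        have := abs_sub_le (w p) (w q) (w y)
        rw [abs_sub_comm (w p) (w q)] at this
        linarith
    _ ≤ K * |t| + 2 * (L + K) * h := by linarith

end Stmt14

open Stmt14

theorem stmt_14_general (d : ℕ) (K : ℝ) (hK : 0 < K)
    (N : ℕ → ℕ) (hNpos : ∀ n, 0 < N n)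
    (htend : Tendsto (fun n => (1 : ℝ) / N n) atTop (nhds 0))
    (u_ : ℕ → (Fin d → ℝ) → ℝ)
    (hbdd : ∀ n, ∀ x, onMesh d (1 / N n) x → |u_ n x| ≤ K)
    (hlip : ∀ n, ∀ x, ∀ i : Fin d, onMesh d (1 / N n) x →
      onMesh d (1 / N n) (x + (1 / N n : ℝ) • ee d i) →
      |D1 d (1 / N n) (u_ n) x i| ≤ K) :
    ∃ u : (Fin d → ℝ) → ℝ,
      (∀ x ∈ Q d, |u x| ≤ K) ∧
      (∀ x ∈ Q d, ∀ i : Fin d, ∀ t : ℝ, 0 < t → x + t • ee d i ∈ Q d →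
        |u x - u (x + t • ee d i)| ≤ K * t) ∧
      ∃ φ : ℕ → ℕ, StrictMono φ ∧
        ∀ ε : ℝ, 0 < ε → ∃ j₀, ∀ j ≥ j₀, ∀ x,
          onMesh d (1 / N (φ j)) x → |u_ (φ j) x - u x| < ε := by
  have hh : ∀ n, (0 : ℝ) < 1 / N n := fun n => by have := hNpos n; positivity
  choose w hwL hwu hwK using fun n =>
    (lipschitzOnWith_onMesh (hh n) hK.le (hlip n)).exists_lipschitzWith_eqOn_abs_le hK.le (hbdd n)
  obtain ⟨u, φ, hφ, hconv⟩ := exists_strictMono_tendstoUniformlyOn_of_lipschitzOnWith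
    (isCompact_Icc : IsCompact (Q d)) (fun n => (hwL n).lipschitzOnWith) fun n x _ => hwK n x
  have hlim : ∀ x ∈ Q d, Tendsto (fun j => w (φ j) x) atTop (nhds (u x)) :=
    fun x hx => hconv.tendsto_at hx
  refine ⟨u, fun x hx => le_of_tendsto' (hlim x hx).abs fun j => hwK _ x,
    fun x hx i t ht hxt => ?_, φ, hφ, fun ε hε => ?_⟩
  · have herr : Tendsto (fun j => K * |t| + 2 * ((K * d).toNNReal + K) * (1 / N (φ j)))
        atTop (nhds (K * t)) := by
      simpa [abs_of_pos ht] using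
        ((htend.comp hφ.tendsto_atTop).const_mul (2 * ((K * d).toNNReal + K))).const_add (K * |t|)
    exact le_of_tendsto_of_tendsto' ((hlim x hx).sub (hlim _ hxt)).abs herr fun j =>
      abs_sub_add_smul_ee_le (hh _) hK.le (hlip _) (hwL _) (hwu _) hx hxt
  · obtain ⟨j₀, hj₀⟩ := eventually_atTop.1 (Metric.tendstoUniformlyOn_iff.1 hconv ε hε)
    refine ⟨j₀, fun j hj x hx => ?_⟩
    rw [hwu _ hx, abs_sub_comm, ← Real.dist_eq]
    exact hj₀ j hj x hx.1

/-- discrete Arzelà–Ascoli: Let `K > 0` and let `u_ n : M_{h n} → ℝ` be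
discrete functions on nested meshes with `h n = 1 / N n ↓ 0`, such that
`u_ n ∈ Λ¹_{h n, K}` (values and first order finite differences bounded by `K`).
Then there is `u ∈ Λ¹_K` and a subsequence along which
`max_{x ∈ M_{h'}} |u_{h'}(x) - u(x)| → 0`. -/
theorem stmt_14 (d : ℕ) (hd : 0 < d) (K : ℝ) (hK : 0 < K)
    (N : ℕ → ℕ) (hNpos : ∀ n, 0 < N n) (hNmono : StrictMono N)
    (hdvd : ∀ n, N n ∣ N (n + 1))
    (htend : Tendsto (fun n => (1 : ℝ) / N n) atTop (nhds 0))
    (u_ : ℕ → (Fin d → ℝ) → ℝ)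
    (hbdd : ∀ n, ∀ x, onMesh d (1 / N n) x → |u_ n x| ≤ K)
    (hlip : ∀ n, ∀ x, ∀ i : Fin d, onMesh d (1 / N n) x →
      onMesh d (1 / N n) (x + (1 / N n : ℝ) • ee d i) →
      |D1 d (1 / N n) (u_ n) x i| ≤ K) :
    ∃ u : (Fin d → ℝ) → ℝ,
      (∀ x ∈ Q d, |u x| ≤ K) ∧
      (∀ x ∈ Q d, ∀ i : Fin d, ∀ t : ℝ, 0 < t → x + t • ee d i ∈ Q d →
        |u x - u (x + t • ee d i)| ≤ K * t) ∧
      ∃ φ : ℕ → ℕ, StrictMono φ ∧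
        ∀ ε : ℝ, 0 < ε → ∃ j₀, ∀ j ≥ j₀, ∀ x,
          onMesh d (1 / N (φ j)) x → |u_ (φ j) x - u x| < ε :=
  stmt_14_general d K hK N hNpos htend u_ hbdd hlip
end
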